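/- arXiv:1809.00514 — 9 statements merged into one kernel-verified Lean document; each statement's English description precedes it below -/
import Mathlib

section
/- For all integers i, j, the tensor product datum S_i ⊗ M_j is isomorphic to M_{i+j} (indices read modulo 2n, which is automatic since q^{2n} = 1). -/
open TensorProduct

structure Datum (k : Type*) [Field k] (V : Type*) [AddCommGroup V] [Module k V] where
  Z : Module.End k V
  X : Module.End k V

namespace Datum

variable {k : Type*} [Field k]
variable {V W : Type*} [AddCommGroup V] [Module k V] [AddCommGroup W] [Module k W]

/-- The tensor product of two data, via the comultiplication
`Δ(z) = z ⊗ z + a(1-q⁻²) zⁿ⁺¹x ⊗ zx`, `Δ(x) = x ⊗ 1 + zⁿ ⊗ x`. -/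
noncomputable def tensor (n : ℕ) (q a : k) (d : Datum k V) (e : Datum k W) :
    Datum k (V ⊗[k] W) where
  Z := TensorProduct.map d.Z e.Z +
    (a * (1 - q⁻¹ ^ 2)) • TensorProduct.map (d.Z ^ (n + 1) * d.X) (e.Z * e.X)
  X := TensorProduct.map d.X LinearMap.id + TensorProduct.map (d.Z ^ n) e.X

/-- Direct sum of two data. -/
noncomputable def dsum (d : Datum k V) (e : Datum k W) : Datum k (V × W) where
  Z := d.Z.prodMap e.Z
  X := d.X.prodMap e.X

/-- Isomorphism of data: a linear isomorphism intertwining the operators. -/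
def Iso (d : Datum k V) (e : Datum k W) : Prop :=
  ∃ f : V ≃ₗ[k] W, (∀ v : V, f (d.Z v) = e.Z (f v)) ∧ (∀ v : V, f (d.X v) = e.X (f v))

/-- The datum `S_i`. -/
noncomputable def S (q : k) (i : ℤ) : Datum k k :=
  ⟨q ^ i • (1 : Module.End k k), 0⟩

/-- The datum `M_i`. -/
noncomputable def M (q : k) (i : ℤ) : Datum k (Fin 2 → k) :=
  ⟨Matrix.toLin' !![q ^ i, 0; 0, q ^ (i + 1)], Matrix.toLin' !![0, 0; 1, 0]⟩

/-- The datum `N₀`. -/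
noncomputable def N0 : Datum k k := ⟨0, 0⟩

/-- The datum `N₁`. -/
noncomputable def N1 : Datum k (Fin 2 → k) := ⟨0, Matrix.toLin' !![0, 0; 1, 0]⟩

end Datum

/-- `S_i ⊗ M_j ≅ M_{i+j}`. -/
theorem stmt_5 {k : Type*} [Field k] [CharZero k] (n : ℕ) (hn : 1 ≤ n)
    (q a : k) (hq : IsPrimitiveRoot q (2 * n)) (ha : a ≠ 0) (i j : ℤ) :
    Datum.Iso (Datum.tensor n q a (Datum.S q i) (Datum.M q j)) (Datum.M q (i + j)) := by
  have hq0 : q ≠ 0 := hq.ne_zero (by positivity)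
  have hc : ((q ^ i) ^ n : k) ≠ 0 := pow_ne_zero _ (zpow_ne_zero _ hq0)
  set c : k := (q ^ i) ^ n with hcdef
  set g : (Fin 2 → k) ≃ₗ[k] (Fin 2 → k) :=
    LinearEquiv.ofLinear (Matrix.toLin' !![(1:k), 0; 0, c⁻¹]) (Matrix.toLin' !![(1:k), 0; 0, c])
      (by
        rw [← Matrix.toLin'_mul]
        have h1 : (!![(1:k), 0; 0, c⁻¹] * !![(1:k), 0; 0, c]) = 1 := by
          rw [Matrix.mul_fin_two, Matrix.one_fin_two]
          norm_num [inv_mul_cancel₀ hc]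
        rw [h1, Matrix.toLin'_one])
      (by
        rw [← Matrix.toLin'_mul]
        have h1 : (!![(1:k), 0; 0, c] * !![(1:k), 0; 0, c⁻¹]) = 1 := by
          rw [Matrix.mul_fin_two, Matrix.one_fin_two]
          norm_num [mul_inv_cancel₀ hc]
        rw [h1, Matrix.toLin'_one]) with hgdef
  set f : (k ⊗[k] (Fin 2 → k)) ≃ₗ[k] (Fin 2 → k) :=
    (TensorProduct.lid k (Fin 2 → k)).trans g with hfdef
  have hZ : f.toLinearMap ∘ₗ (Datum.tensor n q a (Datum.S q i) (Datum.M q j)).Z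
      = (Datum.M q (i + j)).Z ∘ₗ f.toLinearMap := by
    apply TensorProduct.ext'
    intro s w
    simp only [Datum.tensor, Datum.S, Datum.M, LinearMap.comp_apply, LinearMap.add_apply,
      LinearMap.smul_apply, TensorProduct.map_tmul, Module.End.mul_apply, LinearMap.zero_apply,
      map_zero, TensorProduct.tmul_zero, smul_zero, add_zero, LinearMap.smul_apply,
      Module.End.one_apply, hfdef, hgdef, LinearEquiv.trans_apply, TensorProduct.lid_tmul,
      LinearEquiv.ofLinear_apply, map_smul]
    funext l
    fin_cases l <;>
      simp [Matrix.toLin'_apply, Matrix.mulVec, dotProduct, Fin.sum_univ_two,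
        smul_eq_mul, zpow_add₀ hq0] <;>
      (try field_simp) <;> (try ring)
  have hX : f.toLinearMap ∘ₗ (Datum.tensor n q a (Datum.S q i) (Datum.M q j)).X
      = (Datum.M q (i + j)).X ∘ₗ f.toLinearMap := by
    apply TensorProduct.ext'
    intro s w
    simp only [Datum.tensor, Datum.S, Datum.M, LinearMap.comp_apply, LinearMap.add_apply,
      TensorProduct.map_tmul, LinearMap.zero_apply, TensorProduct.zero_tmul, zero_add,
      smul_pow, one_pow, LinearMap.smul_apply, Module.End.one_apply, hfdef, hgdef,
      LinearEquiv.trans_apply, TensorProduct.lid_tmul, LinearEquiv.ofLinear_apply, map_smul]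
    funext l
    fin_cases l <;>
      simp [Matrix.toLin'_apply, Matrix.mulVec, dotProduct, Fin.sum_univ_two,
        smul_eq_mul] <;>
      (try field_simp) <;> (try ring)
  exact ⟨f, fun v => DFunLike.congr_fun hZ v, fun v => DFunLike.congr_fun hX v⟩
end

section
/- For all integers i, j, the tensor product datum M_i ⊗ M_j is isomorphic to the direct sum M_{i+j} ⊕ M_{i+j+1} (indices read modulo 2n, which is automatic since q^{2n} = 1). -/
open TensorProduct

namespace Stmt6Aux
variable {k : Type*} [Field k]

noncomputable def Fbil (ε a : k) :
    (Fin 2 → k) →ₗ[k] (Fin 2 → k) →ₗ[k] ((Fin 2 → k) × (Fin 2 → k)) :=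
  LinearMap.mk₂ k
    (fun v w => (![v 0 * w 0, ε * (v 0 * w 1)],
                 ![v 1 * w 0 - ε * (v 0 * w 1), a * (v 0 * w 0) - ε * (v 1 * w 1)]))
    (by intro m₁ m₂ w; refine Prod.ext ?_ ?_ <;> (funext x; fin_cases x <;> (simp; ring)))
    (by intro c m w; refine Prod.ext ?_ ?_ <;> (funext x; fin_cases x <;> (simp; ring)))
    (by intro m w₁ w₂; refine Prod.ext ?_ ?_ <;> (funext x; fin_cases x <;> (simp; ring)))
    (by intro c m w; refine Prod.ext ?_ ?_ <;> (funext x; fin_cases x <;> (simp; ring)))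

@[simp] lemma Fbil_apply (ε a : k) (v w : Fin 2 → k) :
    Fbil ε a v w = (![v 0 * w 0, ε * (v 0 * w 1)],
                 ![v 1 * w 0 - ε * (v 0 * w 1), a * (v 0 * w 0) - ε * (v 1 * w 1)]) := rfl

lemma MZ_apply (q : k) (i : ℤ) (v : Fin 2 → k) :
    (Datum.M q i).Z v = ![q ^ i * v 0, q ^ (i + 1) * v 1] := by
  funext x; fin_cases x <;>
    simp [Datum.M, Matrix.toLin'_apply, Matrix.mulVec, dotProduct, Fin.sum_univ_two]

lemma MX_apply (q : k) (i : ℤ) (v : Fin 2 → k) :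
    (Datum.M q i).X v = ![0, v 0] := by
  funext x; fin_cases x <;>
    simp [Datum.M, Matrix.toLin'_apply, Matrix.mulVec, dotProduct, Fin.sum_univ_two]

lemma MZpow (q : k) (i : ℤ) (m : ℕ) (v : Fin 2 → k) :
    ((Datum.M q i).Z ^ m) v = ![(q ^ i) ^ m * v 0, (q ^ (i + 1)) ^ m * v 1] := by
  induction m generalizing v with
  | zero => funext x; fin_cases x <;> simp
  | succ m ih =>
      rw [pow_succ, Module.End.mul_apply, MZ_apply, ih]
      funext x; fin_cases x <;> (simp; ring)

end Stmt6Aux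

/-- `M_i ⊗ M_j ≅ M_{i+j} ⊕ M_{i+j+1}`. -/
theorem stmt_6 {k : Type*} [Field k] [CharZero k] (n : ℕ) (hn : 1 ≤ n)
    (q a : k) (hq : IsPrimitiveRoot q (2 * n)) (ha : a ≠ 0) (i j : ℤ) :
    Datum.Iso (Datum.tensor n q a (Datum.M q i) (Datum.M q j))
      (Datum.dsum (Datum.M q (i + j)) (Datum.M q (i + j + 1))) := by
  have hq0 : q ≠ 0 := hq.ne_zero (by omega)
  have hm1 : (-1 : k) ≠ 0 := by norm_num
  have hqn : q ^ n = -1 := by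
    have h2 : q ^ n * q ^ n = 1 := by
      rw [← pow_add]
      have hnn : n + n = 2 * n := by ring
      rw [hnn]; exact hq.pow_eq_one
    rcases mul_self_eq_one_iff.mp h2 with h | h
    · exact absurd h (hq.pow_ne_one_of_pos_of_lt (by omega) (by omega))
    · exact h
  set ε : k := (-1) ^ i with hεdef
  have hε : ε * ε = 1 := by
    rw [hεdef, ← zpow_add₀ hm1]
    have h2 : i + i = 2 * i := by ring
    rw [h2, zpow_mul]; norm_num
  have hA : (q ^ i) ^ n = ε := by
    rw [hεdef, ← zpow_natCast (q ^ i) n, ← zpow_mul, mul_comm, zpow_mul, zpow_natCast, hqn]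
  have hB : (q ^ (i + 1)) ^ n = -ε := by
    rw [hεdef, ← zpow_natCast (q ^ (i + 1)) n, ← zpow_mul, mul_comm, zpow_mul, zpow_natCast,
      hqn, zpow_add_one₀ hm1]
    ring
  have hC : (q ^ (i + 1)) ^ (n + 1) = -ε * q ^ (i + 1) := by
    rw [pow_succ, hB]
  have hB' : (q ^ i * q) ^ n = -ε := by rw [← zpow_add_one₀ hq0]; exact hB
  have hC' : (q ^ i * q) ^ (n + 1) = -ε * (q ^ i * q) := by
    rw [pow_succ, hB']
  set F : (Fin 2 → k) ⊗[k] (Fin 2 → k) →ₗ[k] ((Fin 2 → k) × (Fin 2 → k)) :=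
    TensorProduct.lift (Stmt6Aux.Fbil ε a) with hFdef
  have hFt : ∀ x y : Fin 2 → k, F (x ⊗ₜ y) =
      (![x 0 * y 0, ε * (x 0 * y 1)],
       ![x 1 * y 0 - ε * (x 0 * y 1), a * (x 0 * y 0) - ε * (x 1 * y 1)]) := by
    intro x y; rw [hFdef]; simp
  have hsurj : Function.Surjective F := by
    intro p
    refine ⟨(![p.1 0, p.1 1 + p.2 0]) ⊗ₜ (![1, 0]) +
      (![ε * p.1 1, a * ε * p.1 0 - ε * p.2 1]) ⊗ₜ (![0, 1]), ?_⟩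
    rw [map_add, hFt, hFt]
    refine Prod.ext ?_ ?_
    · funext x; fin_cases x
      · simp
      · simp
        linear_combination p.1 1 * hε
    · funext x; fin_cases x
      · simp
        linear_combination (-(p.1 1)) * hε
      · simp
        linear_combination (p.2 1 - a * p.1 0) * hε
  have hfr : Module.finrank k ((Fin 2 → k) ⊗[k] (Fin 2 → k)) =
      Module.finrank k ((Fin 2 → k) × (Fin 2 → k)) := by
    simp [Module.finrank_tensorProduct]
  have hinj : Function.Injective F :=
    (LinearMap.injective_iff_surjective_of_finrank_eq_finrank hfr).mpr hsurj
  refine ⟨LinearEquiv.ofBijective F ⟨hinj, hsurj⟩, ?_, ?_⟩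
  · intro v
    have key : F ∘ₗ (Datum.tensor n q a (Datum.M q i) (Datum.M q j)).Z =
        (Datum.dsum (Datum.M q (i + j)) (Datum.M q (i + j + 1))).Z ∘ₗ F := by
      apply TensorProduct.ext'
      intro x y
      simp only [Datum.tensor, Datum.dsum, LinearMap.comp_apply, LinearMap.add_apply,
        LinearMap.smul_apply, TensorProduct.map_tmul, Module.End.mul_apply, map_add,
        LinearMapClass.map_smul]
      rw [Stmt6Aux.MX_apply, Stmt6Aux.MX_apply, Stmt6Aux.MZ_apply q i, Stmt6Aux.MZ_apply q j,
        Stmt6Aux.MZ_apply q j, Stmt6Aux.MZpow, hFt, hFt, hFt, LinearMap.prodMap_apply,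
        Stmt6Aux.MZ_apply q (i + j), Stmt6Aux.MZ_apply q (i + j + 1)]
      refine Prod.ext ?_ ?_
      · funext t; fin_cases t
        · simp [zpow_add₀ hq0, hC', hA, hB', smul_eq_mul]; try ring
        · simp [zpow_add₀ hq0, hC', hA, hB', smul_eq_mul]; try ring
      · funext t; fin_cases t
        · simp [zpow_add₀ hq0, hC', hA, hB', smul_eq_mul]; try ring
        · simp [zpow_add₀ hq0, hC', hA, hB', smul_eq_mul]
          field_simp
          linear_combination (a * x 0 * y 0 * (q ^ 2 - 1)) * hε
    exact LinearMap.congr_fun key v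
  · intro v
    have key : F ∘ₗ (Datum.tensor n q a (Datum.M q i) (Datum.M q j)).X =
        (Datum.dsum (Datum.M q (i + j)) (Datum.M q (i + j + 1))).X ∘ₗ F := by
      apply TensorProduct.ext'
      intro x y
      simp only [Datum.tensor, Datum.dsum, LinearMap.comp_apply, LinearMap.add_apply,
        TensorProduct.map_tmul, map_add, LinearMap.id_coe, id_eq]
      rw [Stmt6Aux.MX_apply q i, Stmt6Aux.MX_apply q j, Stmt6Aux.MZpow, hFt, hFt, hFt,
        LinearMap.prodMap_apply, Stmt6Aux.MX_apply q (i + j), Stmt6Aux.MX_apply q (i + j + 1)]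
      refine Prod.ext ?_ ?_
      · funext t; fin_cases t
        · simp [zpow_add₀ hq0, hA, hB']; try ring
        · simp [zpow_add₀ hq0, hA, hB']
          linear_combination (x 0 * y 0) * hε
      · funext t; fin_cases t
        · simp [zpow_add₀ hq0, hA, hB']
          linear_combination (-(x 0 * y 0)) * hε
        · simp [zpow_add₀ hq0, hA, hB']
          linear_combination (x 1 * y 0) * hε
    exact LinearMap.congr_fun key v
end

section
/- Suppose T : B → B is a k-linear algebra anti-homomorphism (T(1) = 1 and T(uv) = T(v)T(u) for all u, v ∈ B) with T(Z) = Z^{2n−1} and T(X) = −Z^n X. Then T is a weak antipode for B: id ∗ T ∗ id = id and T ∗ id ∗ T = T, where ∗ denotes the convolution product f ∗ g = μ ∘ (f ⊗ g) ∘ Δ on k-linear endomorphisms of B (μ the multiplication, Δ the comultiplication of B). -/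
open TensorProduct

/-- The convolution product `f ∗ g = μ ∘ (f ⊗ g) ∘ Δ` on `k`-linear endomorphisms of a
bialgebra `B`. -/
noncomputable def conv {k B : Type*} [CommRing k] [Ring B] [Bialgebra k B]
    (f g : B →ₗ[k] B) : B →ₗ[k] B :=
  LinearMap.mul' k B ∘ₗ TensorProduct.map f g ∘ₗ Coalgebra.comul

/-- if `T` is a linear algebra anti-endomorphism of `B = 𝔴H₄ₙ` with
`T(Z) = Z^{2n-1}` and `T(X) = -ZⁿX`, then `T` is a weak antipode:
`id ∗ T ∗ id = id` and `T ∗ id ∗ T = T`. -/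
theorem stmt_8 {k B : Type*} [Field k] [CharZero k] [Ring B] [Bialgebra k B]
    (n : ℕ) (hn : 1 ≤ n) (q a : k) (hq : IsPrimitiveRoot q (2 * n))
    (Z X : B) (hgen : Algebra.adjoin k {Z, X} = ⊤)
    (hZ : Z ^ (2 * n + 1) = Z) (hZX : Z * X = q • (X * Z)) (hX : X ^ 2 = 0)
    (hcZ : Coalgebra.comul (R := k) Z
        = Z ⊗ₜ[k] Z + (a * (1 - q⁻¹ ^ 2)) • ((Z ^ (n + 1) * X) ⊗ₜ[k] (Z * X)))
    (hcX : Coalgebra.comul (R := k) X = X ⊗ₜ[k] 1 + (Z ^ n) ⊗ₜ[k] X)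
    (heZ : Coalgebra.counit (R := k) Z = 1)
    (heX : Coalgebra.counit (R := k) X = 0)
    (T : B →ₗ[k] B) (hT1 : T 1 = 1) (hTmul : ∀ u v : B, T (u * v) = T v * T u)
    (hTZ : T Z = Z ^ (2 * n - 1)) (hTX : T X = -(Z ^ n * X)) :
    conv (conv LinearMap.id T) LinearMap.id = LinearMap.id ∧
    conv (conv T LinearMap.id) T = T := by
  obtain ⟨d, hd⟩ : ∃ d, 2 * n = d + 1 := ⟨2 * n - 1, by omega⟩
  obtain ⟨n', hn'⟩ : ∃ n', n = n' + 1 := ⟨n - 1, by omega⟩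
  have hd' : d = 2 * n' + 1 := by omega
  have hTZ' : T Z = Z ^ d := by rw [hTZ]; congr 1; omega
  have hq2n : q ^ (2 * n) = 1 := hq.pow_eq_one
  have hXX : X * X = 0 := by rw [← sq]; exact hX
  -- power reduction
  have pZ : ∀ m : ℕ, 1 ≤ m → Z ^ (m + 2 * n) = Z ^ m := by
    intro m hm
    obtain ⟨m', rfl⟩ : ∃ m', m = m' + 1 := ⟨m - 1, by omega⟩
    have h1 : m' + 1 + 2 * n = m' + (2 * n + 1) := by omega
    rw [h1, pow_add, hZ, ← pow_succ]
  have pZt : ∀ (m t : ℕ), 1 ≤ m → Z ^ (m + 2 * n * t) = Z ^ m := by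
    intro m t hm
    induction t with
    | zero => simp
    | succ t ih =>
      have h1 : m + 2 * n * (t + 1) = m + 2 * n * t + 2 * n := by ring
      rw [h1, pZ _ (by omega), ih]
  have qred : ∀ (e t : ℕ), q ^ (e + 2 * n * t) = q ^ e := by
    intro e t
    rw [pow_add, pow_mul, hq2n, one_pow, mul_one]
  -- commutation
  have c1 : ∀ m : ℕ, Z ^ m * X = q ^ m • (X * Z ^ m) := by
    intro m
    induction m with
    | zero => simp
    | succ m ih =>
      rw [pow_succ, mul_assoc, hZX, mul_smul_comm, ← mul_assoc, ih, smul_mul_assoc,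
        smul_smul, mul_assoc, ← pow_succ, ← pow_succ']
  have c2 : ∀ m : ℕ, X * Z ^ m = q ^ (m * d) • (Z ^ m * X) := by
    intro m
    rw [c1 m, smul_smul, ← pow_add]
    have he : m * d + m = 2 * n * m := by rw [hd]; ring
    rw [he, pow_mul, hq2n, one_pow, one_smul]
  -- normal form lemmas
  have mZZ : ∀ p r : ℕ, Z ^ p * (Z ^ r * X) = Z ^ (p + r) * X := by
    intro p r; rw [← mul_assoc, ← pow_add]
  have mXZ : ∀ p r : ℕ, (Z ^ p * X) * Z ^ r = q ^ (r * d) • (Z ^ (p + r) * X) := by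
    intro p r; rw [mul_assoc, c2, mul_smul_comm, ← mul_assoc, ← pow_add]
  have mXZX : ∀ p r : ℕ, (Z ^ p * X) * (Z ^ r * X) = 0 := by
    intro p r
    have h1 : X * (Z ^ r * X) = 0 := by
      rw [← mul_assoc, c2, smul_mul_assoc, mul_assoc, hXX, mul_zero, smul_zero]
    rw [mul_assoc, h1, mul_zero]
  -- T on monomials
  have TZp : ∀ i : ℕ, T (Z ^ i) = Z ^ (d * i) := by
    intro i
    induction i with
    | zero => simpa using hT1
    | succ i ih =>
      rw [pow_succ, hTmul, hTZ', ih, ← pow_add]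
      congr 1; ring
  have TZX : ∀ i : ℕ, T (Z ^ i * X) = -(q ^ (d * i * d) • (Z ^ (n + d * i) * X)) := by
    intro i
    rw [hTmul, hTX, TZp, neg_mul, mul_assoc, c2, mul_smul_comm, ← mul_assoc, ← pow_add]
  -- comul on monomials
  have comul1 : Coalgebra.comul (R := k) (1 : B) = (1 : B) ⊗ₜ[k] (1 : B) := by
    rw [Bialgebra.comul_one]; rfl
  have cA : ∀ i : ℕ, 1 ≤ i → ∃ c : k,
      Coalgebra.comul (R := k) (Z ^ i)
        = (Z ^ i) ⊗ₜ[k] (Z ^ i) + c • ((Z ^ (n + i) * X) ⊗ₜ[k] (Z ^ i * X)) := by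
    intro i hi
    obtain ⟨i', rfl⟩ : ∃ i', i = i' + 1 := ⟨i - 1, by omega⟩
    clear hi
    induction i' with
    | zero => exact ⟨a * (1 - q⁻¹ ^ 2), by simpa using hcZ⟩
    | succ i ih =>
      obtain ⟨c, hc⟩ := ih
      refine ⟨a * (1 - q⁻¹ ^ 2) + c * (q ^ (1 * d) * q ^ (1 * d)), ?_⟩
      have key : Coalgebra.comul (R := k) (Z ^ (i + 1 + 1))
          = Coalgebra.comul (R := k) (Z ^ (i + 1)) * Coalgebra.comul (R := k) Z := by
        rw [pow_succ, Bialgebra.comul_mul]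
      rw [key, hc, hcZ]
      have e1 : Z ^ (i + 1) * Z = Z ^ (i + 1 + 1) := (pow_succ Z (i + 1)).symm
      have e2 : Z ^ (i + 1) * (Z ^ (n + 1) * X) = Z ^ (n + (i + 1 + 1)) * X := by
        rw [mZZ]; congr 2; ring
      have e3 : Z ^ (i + 1) * (Z * X) = Z ^ (i + 1 + 1) * X := by
        rw [← mul_assoc, ← pow_succ]
      have e4 : (Z ^ (n + (i + 1)) * X) * Z = q ^ (1 * d) • (Z ^ (n + (i + 1 + 1)) * X) := by
        have := mXZ (n + (i + 1)) 1
        simpa [pow_one, add_assoc] using this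
      have e5 : (Z ^ (i + 1) * X) * Z = q ^ (1 * d) • (Z ^ (i + 1 + 1) * X) := by
        have := mXZ (i + 1) 1
        simpa [pow_one] using this
      have e6 : (Z ^ (n + (i + 1)) * X) * (Z ^ (n + 1) * X) = 0 := mXZX _ _
      have e7 : (Z ^ (i + 1) * X) * (Z * X) = 0 := by
        have := mXZX (i + 1) 1
        simpa [pow_one] using this
      simp only [add_mul, mul_add, smul_mul_assoc, mul_smul_comm, smul_smul,
        Algebra.TensorProduct.tmul_mul_tmul, e1, e2, e3, e4, e5, e6, e7,
        TensorProduct.zero_tmul, TensorProduct.tmul_zero, smul_zero, mul_zero, zero_mul,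
        add_zero, zero_add, ← TensorProduct.smul_tmul', TensorProduct.tmul_smul]
      module
  have cB : ∀ i : ℕ,
      Coalgebra.comul (R := k) (Z ^ i * X)
        = (Z ^ i * X) ⊗ₜ[k] (Z ^ i) + (Z ^ (n + i)) ⊗ₜ[k] (Z ^ i * X) := by
    intro i
    rcases Nat.eq_zero_or_pos i with rfl | hi
    · simpa using hcX
    · obtain ⟨c, hc⟩ := cA i hi
      rw [Bialgebra.comul_mul, hc, hcX]
      have e1 : Z ^ i * Z ^ n = Z ^ (n + i) := by rw [← pow_add]; congr 1; ring
      have e2 : (Z ^ (n + i) * X) * X = 0 := by rw [mul_assoc, hXX, mul_zero]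
      have e3 : (Z ^ i * X) * X = 0 := by rw [mul_assoc, hXX, mul_zero]
      rw [add_mul, mul_add, mul_add, smul_mul_assoc, smul_mul_assoc,
        Algebra.TensorProduct.tmul_mul_tmul, Algebra.TensorProduct.tmul_mul_tmul,
        Algebra.TensorProduct.tmul_mul_tmul, Algebra.TensorProduct.tmul_mul_tmul,
        e1, e2, e3, mul_one]
      simp
  -- convolution on explicit comultiplications
  have convApp : ∀ (f g : B →ₗ[k] B) (x u v s t : B) (c : k),
      Coalgebra.comul (R := k) x = u ⊗ₜ[k] v + c • (s ⊗ₜ[k] t) →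
      conv f g x = f u * g v + c • (f s * g t) := by
    intro f g x u v s t c h
    simp [conv, h]
  have convApp2 : ∀ (f g : B →ₗ[k] B) (x u v s t : B),
      Coalgebra.comul (R := k) x = u ⊗ₜ[k] v + s ⊗ₜ[k] t →
      conv f g x = f u * g v + f s * g t := by
    intro f g x u v s t h
    simp [conv, h]
  have convApp1 : ∀ (f g : B →ₗ[k] B) (x u v : B),
      Coalgebra.comul (R := k) x = u ⊗ₜ[k] v →
      conv f g x = f u * g v := by
    intro f g x u v h
    simp [conv, h]
  -- values of G = id ∗ T
  have G1 : conv LinearMap.id T 1 = 1 := by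
    rw [convApp1 _ _ _ _ _ comul1]; simpa using hT1
  have GZ : ∀ i : ℕ, 1 ≤ i → conv LinearMap.id T (Z ^ i) = Z ^ (2 * n) := by
    intro i hi
    obtain ⟨c, hc⟩ := cA i hi
    rw [convApp _ _ _ _ _ _ _ _ hc]
    obtain ⟨i', rfl⟩ : ∃ i', i = i' + 1 := ⟨i - 1, by omega⟩
    simp only [LinearMap.id_coe, id_eq]
    rw [TZp, TZX, mul_neg, mul_smul_comm, mXZX, smul_zero, neg_zero, smul_zero, add_zero,
      ← pow_add]
    have he : i' + 1 + d * (i' + 1) = 2 * n + 2 * n * i' := by rw [hd]; ring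
    rw [he, pZt _ _ (by omega)]
  have GZX : ∀ i : ℕ, 1 ≤ i → conv LinearMap.id T (Z ^ i * X) = 0 := by
    intro i hi
    rw [convApp2 _ _ _ _ _ _ _ (cB i)]
    simp only [LinearMap.id_coe, id_eq]
    obtain ⟨i', rfl⟩ : ∃ i', i = i' + 1 := ⟨i - 1, by omega⟩
    rw [TZp, TZX, mXZ, mul_neg, mul_smul_comm, mZZ]
    have h1 : i' + 1 + d * (i' + 1) = 2 * n + 2 * n * i' := by rw [hd]; ring
    have h2 : n + (i' + 1) + (n + d * (i' + 1)) = 2 * n + 2 * n * (i' + 1) := by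
      rw [hn', hd']; ring
    rw [h1, h2, pZt _ _ (by omega), pZt _ _ (by omega)]
    exact add_neg_cancel _
  have GX : conv LinearMap.id T X = X - Z ^ (2 * n) * X := by
    rw [convApp2 _ _ _ _ _ _ _ hcX]
    simp only [LinearMap.id_coe, id_eq]
    rw [hT1, hTX, mul_one, mul_neg, mZZ]
    have : n + n = 2 * n := by ring
    rw [this, sub_eq_add_neg]
  -- values of H = T ∗ id
  have H1 : conv T LinearMap.id 1 = 1 := by
    rw [convApp1 _ _ _ _ _ comul1]; simpa using hT1
  have HZ : ∀ i : ℕ, 1 ≤ i → conv T LinearMap.id (Z ^ i) = Z ^ (2 * n) := by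
    intro i hi
    obtain ⟨c, hc⟩ := cA i hi
    rw [convApp _ _ _ _ _ _ _ _ hc]
    obtain ⟨i', rfl⟩ : ∃ i', i = i' + 1 := ⟨i - 1, by omega⟩
    simp only [LinearMap.id_coe, id_eq]
    rw [TZp, TZX, neg_mul, smul_mul_assoc, mXZX, smul_zero, neg_zero, smul_zero, add_zero,
      ← pow_add]
    have he : d * (i' + 1) + (i' + 1) = 2 * n + 2 * n * i' := by rw [hd]; ring
    rw [he, pZt _ _ (by omega)]
  have HZX : ∀ i : ℕ, conv T LinearMap.id (Z ^ i * X) = 0 := by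
    intro i
    rw [convApp2 _ _ _ _ _ _ _ (cB i)]
    simp only [LinearMap.id_coe, id_eq]
    rw [TZp, TZX, neg_mul, smul_mul_assoc, mXZ, smul_smul, ← pow_add, mZZ]
    have h1 : d * i * d + i * d = 0 + 2 * n * (d * i) := by rw [hd]; ring
    have h2 : n + d * i + i = n + 2 * n * i := by rw [hd]; ring
    have h3 : d * (n + i) + i = n + 2 * n * (n' + i) := by rw [hd', hn']; ring
    rw [h1, qred, pow_zero, h2, pZt _ _ (by omega), h3, pZt _ _ (by omega), one_smul]
    exact neg_add_cancel _
  -- first identity pointwise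
  have FZ : ∀ i : ℕ, 1 ≤ i →
      conv (conv LinearMap.id T) LinearMap.id (Z ^ i) = Z ^ i := by
    intro i hi
    obtain ⟨c, hc⟩ := cA i hi
    rw [convApp _ _ _ _ _ _ _ _ hc]
    simp only [LinearMap.id_coe, id_eq]
    rw [GZ i hi, GZX (n + i) (by omega), zero_mul, smul_zero, add_zero, ← pow_add]
    have he : 2 * n + i = i + 2 * n := by ring
    rw [he, pZ _ hi]
  have F1 : conv (conv LinearMap.id T) LinearMap.id 1 = 1 := by
    rw [convApp1 _ _ _ _ _ comul1]
    simp only [LinearMap.id_coe, id_eq]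
    rw [G1, one_mul]
  have FZX : ∀ i : ℕ,
      conv (conv LinearMap.id T) LinearMap.id (Z ^ i * X) = Z ^ i * X := by
    intro i
    rw [convApp2 _ _ _ _ _ _ _ (cB i)]
    simp only [LinearMap.id_coe, id_eq]
    rcases Nat.eq_zero_or_pos i with rfl | hi
    · simp only [pow_zero, one_mul, mul_one, Nat.add_zero]
      rw [GX, GZ n hn, sub_add_cancel]
    · rw [GZX i hi, zero_mul, zero_add, GZ (n + i) (by omega), mZZ]
      have he : 2 * n + i = i + 2 * n := by ring
      rw [he, pZ _ hi]
  -- second identity pointwise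
  have K1 : conv (conv T LinearMap.id) T 1 = T 1 := by
    rw [convApp1 _ _ _ _ _ comul1, H1, one_mul, hT1]
  have KZ : ∀ i : ℕ, 1 ≤ i →
      conv (conv T LinearMap.id) T (Z ^ i) = T (Z ^ i) := by
    intro i hi
    obtain ⟨c, hc⟩ := cA i hi
    rw [convApp _ _ _ _ _ _ _ _ hc]
    rw [HZ i hi, HZX (n + i), zero_mul, smul_zero, add_zero, TZp, ← pow_add]
    have hdi : 1 ≤ d * i := Nat.mul_pos (by omega) hi
    have he : 2 * n + d * i = d * i + 2 * n := by ring
    rw [he, pZ _ hdi]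
  have KZX : ∀ i : ℕ,
      conv (conv T LinearMap.id) T (Z ^ i * X) = T (Z ^ i * X) := by
    intro i
    rw [convApp2 _ _ _ _ _ _ _ (cB i)]
    rw [HZX i, zero_mul, zero_add, HZ (n + i) (by omega), TZX, mul_neg,
      mul_smul_comm, mZZ]
    have he : 2 * n + (n + d * i) = n + d * i + 2 * n := by ring
    rw [he, pZ _ (by omega)]
  -- spanning set
  set S : Set B := {y : B | ∃ p j : ℕ, y = Z ^ p * X ^ j} with hS
  have c2j : ∀ (j m : ℕ), X ^ j * Z ^ m = (q ^ (m * d)) ^ j • (Z ^ m * X ^ j) := by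
    intro j m
    induction j with
    | zero => simp
    | succ j ih =>
      rw [pow_succ, mul_assoc, c2, mul_smul_comm, ← mul_assoc, ih, smul_mul_assoc,
        smul_smul, mul_assoc, ← pow_succ, ← pow_succ']
  have hmulS : ∀ y₁ ∈ S, ∀ y₂ ∈ S, y₁ * y₂ ∈ Submodule.span k S := by
    rintro _ ⟨p₁, j₁, rfl⟩ _ ⟨p₂, j₂, rfl⟩
    have h1 : (Z ^ p₁ * X ^ j₁) * (Z ^ p₂ * X ^ j₂)
        = (q ^ (p₂ * d)) ^ j₁ • (Z ^ (p₁ + p₂) * X ^ (j₁ + j₂)) := by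
      calc (Z ^ p₁ * X ^ j₁) * (Z ^ p₂ * X ^ j₂)
          = Z ^ p₁ * ((X ^ j₁ * Z ^ p₂) * X ^ j₂) := by rw [mul_assoc, mul_assoc]
        _ = (q ^ (p₂ * d)) ^ j₁ • (Z ^ (p₁ + p₂) * X ^ (j₁ + j₂)) := by
            rw [c2j, smul_mul_assoc, mul_smul_comm, mul_assoc, ← pow_add, ← mul_assoc,
              ← pow_add]
    rw [h1]
    exact Submodule.smul_mem _ _ (Submodule.subset_span ⟨p₁ + p₂, j₁ + j₂, rfl⟩)
  have hmul_span : ∀ x ∈ Submodule.span k S, ∀ y ∈ Submodule.span k S,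
      x * y ∈ Submodule.span k S := by
    intro x hx
    induction hx using Submodule.span_induction with
    | mem x hxS =>
      intro y hy
      induction hy using Submodule.span_induction with
      | mem y hyS => exact hmulS _ hxS _ hyS
      | zero => rw [mul_zero]; exact Submodule.zero_mem _
      | add y z _ _ h1 h2 => rw [mul_add]; exact Submodule.add_mem _ h1 h2
      | smul r y _ h1 => rw [mul_smul_comm]; exact Submodule.smul_mem _ _ h1
    | zero => intro y hy; rw [zero_mul]; exact Submodule.zero_mem _
    | add x z _ _ h1 h2 => intro y hy; rw [add_mul]; exact Submodule.add_mem _ (h1 y hy) (h2 y hy)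
    | smul r x _ h1 => intro y hy; rw [smul_mul_assoc]; exact Submodule.smul_mem _ _ (h1 y hy)
  have hspan : ∀ b : B, b ∈ Submodule.span k S := by
    intro b
    have hb : b ∈ Algebra.adjoin k ({Z, X} : Set B) := by rw [hgen]; exact trivial
    induction hb using Algebra.adjoin_induction with
    | mem x hx =>
      rcases hx with rfl | rfl
      · exact Submodule.subset_span ⟨1, 0, by simp⟩
      · exact Submodule.subset_span ⟨0, 1, by simp⟩
    | algebraMap r =>
      rw [Algebra.algebraMap_eq_smul_one]
      exact Submodule.smul_mem _ _ (Submodule.subset_span ⟨0, 0, by simp⟩)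
    | add x y _ _ h1 h2 => exact Submodule.add_mem _ h1 h2
    | mul x y hx hy h1 h2 => exact hmul_span x h1 y h2
  have hXj : ∀ j : ℕ, 2 ≤ j → X ^ j = 0 := by
    intro j hj
    obtain ⟨j', rfl⟩ : ∃ j', j = j' + 2 := ⟨j - 2, by omega⟩
    rw [pow_add, hX, mul_zero]
  constructor
  · ext b
    simp only [LinearMap.id_coe, id_eq]
    induction hspan b using Submodule.span_induction with
    | mem x hxS =>
      obtain ⟨p, j, rfl⟩ := hxS
      match j with
      | 0 =>
        rw [pow_zero, mul_one]
        rcases Nat.eq_zero_or_pos p with rfl | hp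
        · rw [pow_zero]; exact F1
        · exact FZ p hp
      | 1 => rw [pow_one]; exact FZX p
      | (j + 2) => rw [hXj (j + 2) (by omega), mul_zero, map_zero]
    | zero => rw [map_zero]
    | add x y _ _ h1 h2 => rw [map_add, h1, h2]
    | smul r x _ h1 => rw [map_smul, h1]
  · ext b
    induction hspan b using Submodule.span_induction with
    | mem x hxS =>
      obtain ⟨p, j, rfl⟩ := hxS
      match j with
      | 0 =>
        rw [pow_zero, mul_one]
        rcases Nat.eq_zero_or_pos p with rfl | hp
        · rw [pow_zero]; exact K1
        · exact KZ p hp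
      | 1 => rw [pow_one]; exact KZX p
      | (j + 2) => rw [hXj (j + 2) (by omega), mul_zero, map_zero, map_zero]
    | zero => rw [map_zero, map_zero]
    | add x y _ _ h1 h2 => rw [map_add, map_add, h1, h2]
    | smul r x _ h1 => rw [map_smul, map_smul, h1]
end

section
/- Let A be the quotient of the free k-algebra on two generators Z, X by the two-sided ideal generated by Z^{2n+1} − Z, ZX − q·XZ, and X², and let H be the quotient of the free k-algebra on two generators z, x by the two-sided ideal generated by z^{2n} − 1, zx − q·xz, and x². Then J := Z^{2n} is a central idempotent of A, and A is isomorphic as a k-algebra to the product ring H × k[y]/(y²). -/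
open FreeAlgebra

variable (k : Type*) [Field k]

/-- The relations defining `A = 𝔴H₄ₙ = k⟨Z,X⟩/(Z^{2n+1} - Z, ZX - q·XZ, X²)`. -/
inductive wRel (n : ℕ) (q : k) : FreeAlgebra k (Fin 2) → FreeAlgebra k (Fin 2) → Prop
  | r1 : wRel n q (ι k 0 ^ (2 * n + 1)) (ι k 0)
  | r2 : wRel n q (ι k 0 * ι k 1) (q • (ι k 1 * ι k 0))
  | r3 : wRel n q (ι k 1 ^ 2) 0

/-- The relations defining `H = H₄ₙ = k⟨z,x⟩/(z^{2n} - 1, zx - q·xz, x²)`. -/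
inductive hRel (n : ℕ) (q : k) : FreeAlgebra k (Fin 2) → FreeAlgebra k (Fin 2) → Prop
  | r1 : hRel n q (ι k 0 ^ (2 * n)) 1
  | r2 : hRel n q (ι k 0 * ι k 1) (q • (ι k 1 * ι k 0))
  | r3 : hRel n q (ι k 1 ^ 2) 0

/-!
`J = Z^{2n}` is idempotent because `Z^{2n+1} = Z`, and central because `Z^{2n} X = q^{2n} X Z^{2n}`
with `q^{2n} = 1`. Hence `A ≅ AJ × A(1 - J)`. In the corner `AJ` the element `Z` is a unit with
`Z^{2n} = J`, the identity of the corner, so `AJ` is a quotient of `H`; in `A(1 - J)` the element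
`Z = ZJ` vanishes and only `X` with `X² = 0` survives. The inverse of `Z ↦ (z, 0)`, `X ↦ (x, y)`
is `(z, 0) ↦ Z + 1 - J`, `(x, 0) ↦ JX`, `(0, y) ↦ (1 - J)X`.
-/

section CentralIdempotent

variable {R A S T : Type*} [CommSemiring R] [Ring A] [Algebra R A]
  [Semiring S] [Algebra R S] [Semiring T] [Algebra R T]

theorem add_pow_succ_of_orthogonal {a c : A} (hac : a * c = 0) (hca : c * a = 0)
    (hc : IsIdempotentElem c) (m : ℕ) : (a + c) ^ (m + 1) = a ^ (m + 1) + c := by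
  induction m with
  | zero => simp
  | succ m ih =>
    have hpc : a ^ (m + 1) * c = 0 := by rw [pow_succ, mul_assoc, hac, mul_zero]
    rw [pow_succ, ih, add_mul, mul_add, mul_add, hpc, hca, hc.eq, ← pow_succ, add_zero, zero_add]

theorem mul_mul_mul_of_commute {e : A} (u v e' : A) (he : Commute e v) :
    u * e * (v * e') = u * v * (e * e') := by
  rw [mul_assoc, ← mul_assoc e, he.eq, mul_assoc, mul_assoc]

def AlgHom.prodOfCentralIdempotent (e : A) (he : IsIdempotentElem e) (hc : ∀ u, Commute e u)
    (f : S →ₐ[R] A) (g : T →ₐ[R] A) : S × T →ₐ[R] A where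
  toFun p := f p.1 * e + g p.2 * (1 - e)
  map_one' := by simp
  map_mul' p p' := by
    have hc' (u : A) : Commute (1 - e) u := (Commute.one_left u).sub_left (hc u)
    simp only [Prod.fst_mul, Prod.snd_mul, map_mul, add_mul, mul_add,
      mul_mul_mul_of_commute _ _ _ (hc _), mul_mul_mul_of_commute _ _ _ (hc' _), he.eq,
      he.one_sub.eq, he.mul_one_sub_self, he.one_sub_mul_self, mul_zero, add_zero, zero_add]
  map_zero' := by simp
  map_add' p p' := by
    simp only [Prod.fst_add, Prod.snd_add, map_add, add_mul]
    abel
  commutes' r := by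
    simp only [Prod.algebraMap_apply, AlgHom.commutes, ← mul_add, add_sub_cancel, mul_one]

theorem AlgHom.prodOfCentralIdempotent_apply (e : A) (he : IsIdempotentElem e)
    (hc : ∀ u, Commute e u) (f : S →ₐ[R] A) (g : T →ₐ[R] A) (p : S × T) :
    prodOfCentralIdempotent e he hc f g p = f p.1 * e + g p.2 * (1 - e) := rfl

end CentralIdempotent

theorem RingQuot.algHom_ext_fin_two {R B : Type*} [CommSemiring R] [Semiring B] [Algebra R B]
    {r : FreeAlgebra R (Fin 2) → FreeAlgebra R (Fin 2) → Prop} {φ ψ : RingQuot r →ₐ[R] B}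
    (h0 : φ (mkAlgHom R r (ι R 0)) = ψ (mkAlgHom R r (ι R 0)))
    (h1 : φ (mkAlgHom R r (ι R 1)) = ψ (mkAlgHom R r (ι R 1))) : φ = ψ := by
  refine ringQuot_ext' _ _ _ (FreeAlgebra.hom_ext (funext fun i => ?_))
  fin_cases i
  exacts [h0, h1]

namespace wRel

variable {k} (n : ℕ) (q : k)

noncomputable abbrev Z : RingQuot (wRel k n q) := RingQuot.mkAlgHom k (wRel k n q) (ι k 0)

noncomputable abbrev X : RingQuot (wRel k n q) := RingQuot.mkAlgHom k (wRel k n q) (ι k 1)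

noncomputable abbrev J : RingQuot (wRel k n q) := Z n q ^ (2 * n)

variable {n q}

theorem Z_pow_two_mul_add_one : Z n q ^ (2 * n + 1) = Z n q := by
  simpa using RingQuot.mkAlgHom_rel k (wRel.r1 (n := n) (q := q))

theorem Z_mul_X : Z n q * X n q = q • (X n q * Z n q) := by
  simpa using RingQuot.mkAlgHom_rel k (wRel.r2 (n := n) (q := q))

theorem X_sq : X n q ^ 2 = 0 := by
  simpa using RingQuot.mkAlgHom_rel k (wRel.r3 (n := n) (q := q))

theorem Z_pow_mul_X (m : ℕ) : Z n q ^ m * X n q = q ^ m • (X n q * Z n q ^ m) := by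
  induction m with
  | zero => simp
  | succ m ih =>
    rw [pow_succ, mul_assoc, Z_mul_X, mul_smul_comm, ← mul_assoc, ih, smul_mul_assoc, smul_smul,
      mul_assoc, ← pow_succ, ← pow_succ']

theorem Z_mul_J : Z n q * J n q = Z n q := by
  rw [← pow_succ', Z_pow_two_mul_add_one]

theorem J_mul_Z : J n q * Z n q = Z n q := by
  rw [← pow_succ, Z_pow_two_mul_add_one]

theorem isIdempotentElem_J (hn : 1 ≤ n) : IsIdempotentElem (J n q) := by
  rw [IsIdempotentElem, ← pow_add, show 2 * n + 2 * n = 2 * n + 1 + (2 * n - 1) by omega,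
    pow_add, Z_pow_two_mul_add_one, ← pow_succ', Nat.sub_add_cancel (by omega)]

theorem commute_J (hq : q ^ (2 * n) = 1) (u : RingQuot (wRel k n q)) : Commute (J n q) u := by
  obtain ⟨a, rfl⟩ := RingQuot.mkAlgHom_surjective k (wRel k n q) u
  induction a using FreeAlgebra.induction with
  | grade0 c => simpa only [AlgHom.commutes] using Algebra.commute_algebraMap_right c _
  | grade1 i =>
    fin_cases i
    · exact Commute.pow_self _ _
    · show J n q * X n q = X n q * J n q
      rw [Z_pow_mul_X, hq, one_smul]
  | mul a b ha hb => simpa only [map_mul] using ha.mul_right hb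
  | add a b ha hb => simpa only [map_add] using ha.add_right hb

theorem unit_pow_two_mul (hn : 1 ≤ n) : (Z n q + (1 - J n q)) ^ (2 * n) = 1 := by
  obtain ⟨m, hm⟩ : ∃ m, 2 * n = m + 1 := ⟨2 * n - 1, by omega⟩
  have hJ := isIdempotentElem_J (q := q) hn
  have hZ : Z n q * (1 - J n q) = 0 := by rw [mul_sub, mul_one, Z_mul_J, sub_self]
  have hZ' : (1 - J n q) * Z n q = 0 := by rw [sub_mul, one_mul, J_mul_Z, sub_self]
  rw [hm, add_pow_succ_of_orthogonal hZ hZ' hJ.one_sub, ← hm, add_sub_cancel]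

variable {B : Type*} [Semiring B] [Algebra k B]

noncomputable def lift (a b : B) (ha : a ^ (2 * n + 1) = a) (hab : a * b = q • (b * a))
    (hb : b ^ 2 = 0) : RingQuot (wRel k n q) →ₐ[k] B :=
  RingQuot.liftAlgHom k ⟨FreeAlgebra.lift k ![a, b], by rintro _ _ ⟨⟩ <;> simpa⟩

variable {a b : B} {ha : a ^ (2 * n + 1) = a} {hab : a * b = q • (b * a)} {hb : b ^ 2 = 0}

@[simp]
theorem lift_Z : lift a b ha hab hb (Z n q) = a := by
  simp [lift]

@[simp]
theorem lift_X : lift a b ha hab hb (X n q) = b := by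
  simp [lift]

end wRel

namespace hRel

variable {k} (n : ℕ) (q : k)

noncomputable abbrev z : RingQuot (hRel k n q) := RingQuot.mkAlgHom k (hRel k n q) (ι k 0)

noncomputable abbrev x : RingQuot (hRel k n q) := RingQuot.mkAlgHom k (hRel k n q) (ι k 1)

variable {n q}

theorem z_pow_two_mul : z n q ^ (2 * n) = 1 := by
  simpa using RingQuot.mkAlgHom_rel k (hRel.r1 (n := n) (q := q))

theorem z_mul_x : z n q * x n q = q • (x n q * z n q) := by
  simpa using RingQuot.mkAlgHom_rel k (hRel.r2 (n := n) (q := q))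

theorem x_sq : x n q ^ 2 = 0 := by
  simpa using RingQuot.mkAlgHom_rel k (hRel.r3 (n := n) (q := q))

variable {B : Type*} [Semiring B] [Algebra k B]

noncomputable def lift (a b : B) (ha : a ^ (2 * n) = 1) (hab : a * b = q • (b * a))
    (hb : b ^ 2 = 0) : RingQuot (hRel k n q) →ₐ[k] B :=
  RingQuot.liftAlgHom k ⟨FreeAlgebra.lift k ![a, b], by rintro _ _ ⟨⟩ <;> simpa⟩

variable {a b : B} {ha : a ^ (2 * n) = 1} {hab : a * b = q • (b * a)} {hb : b ^ 2 = 0}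

@[simp]
theorem lift_z : lift a b ha hab hb (z n q) = a := by
  simp [lift]

@[simp]
theorem lift_x : lift a b ha hab hb (x n q) = b := by
  simp [lift]

end hRel

abbrev DualQuot (R : Type*) [CommRing R] : Type _ :=
  Polynomial R ⧸ Ideal.span {(Polynomial.X : Polynomial R) ^ 2}

namespace DualQuot

variable {R : Type*} [CommRing R]

noncomputable abbrev y : DualQuot R := Ideal.Quotient.mk _ Polynomial.X

theorem y_sq : (y : DualQuot R) ^ 2 = 0 := by
  rw [← map_pow, Ideal.Quotient.eq_zero_iff_mem]
  exact Ideal.subset_span rfl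

variable {B : Type*} [Semiring B] [Algebra R B]

noncomputable def lift (b : B) (hb : b ^ 2 = 0) : DualQuot R →ₐ[R] B :=
  Ideal.Quotient.liftₐ _ (Polynomial.aeval b) fun p hp => by
    obtain ⟨c, rfl⟩ := Ideal.mem_span_singleton'.mp hp
    simp [hb]

@[simp]
theorem lift_y {b : B} {hb : b ^ 2 = 0} : lift b hb (y : DualQuot R) = b :=
  (Ideal.Quotient.lift_mk _ _ _).trans (Polynomial.aeval_X b)

theorem algHom_ext {φ ψ : DualQuot R →ₐ[R] B} (h : φ y = ψ y) : φ = ψ :=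
  Ideal.Quotient.algHom_ext R (Polynomial.algHom_ext h)

end DualQuot

namespace wRel

open hRel DualQuot

variable {k} {n : ℕ} {q : k}

noncomputable def toProd : RingQuot (wRel k n q) →ₐ[k] RingQuot (hRel k n q) × DualQuot k :=
  lift (z n q, 0) (x n q, y)
    (by ext <;> simp [pow_succ, z_pow_two_mul])
    (by ext <;> simp [z_mul_x])
    (by ext <;> simp [x_sq, y_sq])

@[simp]
theorem toProd_Z : toProd (Z n q) = (z n q, 0) := lift_Z

@[simp]
theorem toProd_X : toProd (X n q) = (x n q, y) := lift_X

theorem toProd_J (hn : 1 ≤ n) : toProd (J n q) = (1, 0) := by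
  ext <;> simp [z_pow_two_mul, show 2 * n ≠ 0 by omega]

theorem toProd_one_sub_J (hn : 1 ≤ n) : toProd (1 - J n q) = (0, 1) := by
  rw [map_sub, map_one, toProd_J hn]
  ext <;> simp

noncomputable def ofH (hn : 1 ≤ n) (hq : q ^ (2 * n) = 1) :
    RingQuot (hRel k n q) →ₐ[k] RingQuot (wRel k n q) :=
  hRel.lift (Z n q + (1 - J n q)) (J n q * X n q) (unit_pow_two_mul hn)
    (by
      have hJ := isIdempotentElem_J (q := q) hn
      have lhs : (Z n q + (1 - J n q)) * (J n q * X n q) = Z n q * X n q := by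
        rw [add_mul, ← mul_assoc, ← mul_assoc, Z_mul_J, hJ.one_sub_mul_self, zero_mul, add_zero]
      have rhs : J n q * X n q * (Z n q + (1 - J n q)) = X n q * Z n q := by
        rw [(commute_J hq _).eq, mul_add, mul_assoc, mul_assoc, J_mul_Z, hJ.mul_one_sub_self,
          mul_zero, add_zero]
      rw [lhs, rhs, Z_mul_X])
    (by rw [(commute_J hq _).mul_pow, X_sq, mul_zero])

noncomputable def ofDual (hq : q ^ (2 * n) = 1) : DualQuot k →ₐ[k] RingQuot (wRel k n q) :=
  DualQuot.lift ((1 - J n q) * X n q)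
    (by rw [((Commute.one_left _).sub_left (commute_J hq _)).mul_pow, X_sq, mul_zero])

noncomputable def ofProd (hn : 1 ≤ n) (hq : q ^ (2 * n) = 1) :
    RingQuot (hRel k n q) × DualQuot k →ₐ[k] RingQuot (wRel k n q) :=
  .prodOfCentralIdempotent (J n q) (isIdempotentElem_J hn) (commute_J hq) (ofH hn hq) (ofDual hq)

variable (hn : 1 ≤ n) (hq : q ^ (2 * n) = 1)
include hn hq

theorem ofProd_comp_toProd : (ofProd hn hq).comp toProd = AlgHom.id k (RingQuot (wRel k n q)) := by
  have hJ := isIdempotentElem_J (q := q) hn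
  have hX := commute_J hq (X n q)
  have hX' := (Commute.one_left _).sub_left hX
  apply RingQuot.algHom_ext_fin_two
  · show ofProd hn hq (toProd (Z n q)) = Z n q
    simp [ofProd, AlgHom.prodOfCentralIdempotent_apply, ofH, add_mul, Z_mul_J,
      hJ.one_sub_mul_self]
  · show ofProd hn hq (toProd (X n q)) = X n q
    simp only [ofProd, AlgHom.prodOfCentralIdempotent_apply, toProd_X, ofH, ofDual, lift_x, lift_y]
    rw [hX.eq, hX'.eq, mul_assoc, mul_assoc, hJ.eq, hJ.one_sub.eq, ← mul_add, add_sub_cancel,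
      mul_one]

theorem fst_toProd_ofH (a : RingQuot (hRel k n q)) : (toProd (ofH hn hq a)).1 = a := by
  have : (AlgHom.fst k _ _).comp (toProd.comp (ofH hn hq)) = AlgHom.id k _ :=
    RingQuot.algHom_ext_fin_two (by simp [ofH, toProd_J hn]) (by simp [ofH, toProd_J hn])
  exact AlgHom.congr_fun this a

theorem snd_toProd_ofDual (b : DualQuot k) : (toProd (ofDual hq b)).2 = b := by
  have : (AlgHom.snd k _ _).comp (toProd.comp (ofDual hq)) = AlgHom.id k _ :=
    DualQuot.algHom_ext (by simp [ofDual, toProd_one_sub_J hn])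
  exact AlgHom.congr_fun this b

theorem toProd_comp_ofProd :
    toProd.comp (ofProd hn hq) = AlgHom.id k (RingQuot (hRel k n q) × DualQuot k) := by
  ext1 p
  rw [AlgHom.comp_apply, ofProd, AlgHom.prodOfCentralIdempotent_apply, map_add, map_mul, map_mul,
    toProd_J hn, toProd_one_sub_J hn]
  ext <;> simp [fst_toProd_ofH hn hq, snd_toProd_ofDual hn hq]

end wRel

theorem stmt_9_general {k : Type*} [Field k]
    (n : ℕ) (hn : 1 ≤ n) (q : k) (hq : IsPrimitiveRoot q (2 * n)) :
    (RingQuot.mkAlgHom k (wRel k n q) (ι k 0) ^ (2 * n)) *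
        (RingQuot.mkAlgHom k (wRel k n q) (ι k 0) ^ (2 * n))
      = RingQuot.mkAlgHom k (wRel k n q) (ι k 0) ^ (2 * n) ∧
    (∀ u : RingQuot (wRel k n q),
      (RingQuot.mkAlgHom k (wRel k n q) (ι k 0) ^ (2 * n)) * u
        = u * (RingQuot.mkAlgHom k (wRel k n q) (ι k 0) ^ (2 * n))) ∧
    Nonempty (RingQuot (wRel k n q) ≃ₐ[k]
      (RingQuot (hRel k n q) ×
        (Polynomial k ⧸ Ideal.span {(Polynomial.X : Polynomial k) ^ 2}))) := by
  have hq1 : q ^ (2 * n) = 1 := hq.pow_eq_one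
  exact ⟨wRel.isIdempotentElem_J hn, fun u => (wRel.commute_J hq1 u).eq,
    ⟨.ofAlgHom _ _ (wRel.toProd_comp_ofProd hn hq1) (wRel.ofProd_comp_toProd hn hq1)⟩⟩

/-- `J = Z^{2n}` is a central idempotent of `A = 𝔴H₄ₙ`, and `A` is
isomorphic as a `k`-algebra to `H₄ₙ × k[y]/(y²)`. -/
theorem stmt_9 {k : Type*} [Field k] [CharZero k] [IsAlgClosed k]
    (n : ℕ) (hn : 1 ≤ n) (q : k) (hq : IsPrimitiveRoot q (2 * n)) :
    (RingQuot.mkAlgHom k (wRel k n q) (ι k 0) ^ (2 * n)) *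
        (RingQuot.mkAlgHom k (wRel k n q) (ι k 0) ^ (2 * n))
      = RingQuot.mkAlgHom k (wRel k n q) (ι k 0) ^ (2 * n) ∧
    (∀ u : RingQuot (wRel k n q),
      (RingQuot.mkAlgHom k (wRel k n q) (ι k 0) ^ (2 * n)) * u
        = u * (RingQuot.mkAlgHom k (wRel k n q) (ι k 0) ^ (2 * n))) ∧
    Nonempty (RingQuot (wRel k n q) ≃ₐ[k]
      (RingQuot (hRel k n q) ×
        (Polynomial k ⧸ Ideal.span {(Polynomial.X : Polynomial k) ^ 2}))) :=
  stmt_9_general n hn q hq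
end

section
/- Define the following A-modules: for i ∈ ℤ/2n, S_i = k with Z acting by q^i and X acting by 0; M_i = k² with Z e₁ = q^i e₁, Z e₂ = q^{i+1} e₂, X e₁ = e₂, X e₂ = 0; N₀ = k with Z and X acting by 0; N₁ = k² with Z acting by 0 and X e₁ = e₂, X e₂ = 0. Then these 4n + 2 modules are pairwise non-isomorphic indecomposable A-modules, and every nonzero finite-dimensional indecomposable A-module is isomorphic to one of them. -/
open TensorProduct

section

variable {k : Type*} [Field k]
variable {V : Type*} [AddCommGroup V] [Module k V]

/-- A datum is a module over the algebra `A = 𝔴H₄ₙ` precisely when the operators satisfy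
the defining relations `Z^{2n+1} = Z`, `ZX = q·XZ`, `X² = 0`. -/
def Datum.IsWRep (n : ℕ) (q : k) (d : Datum k V) : Prop :=
  d.Z ^ (2 * n + 1) = d.Z ∧ d.Z * d.X = q • (d.X * d.Z) ∧ d.X ^ 2 = 0

/-- A subspace invariant under both operators, i.e. an `A`-submodule. -/
def Datum.Invariant (d : Datum k V) (p : Submodule k V) : Prop :=
  (∀ v ∈ p, d.Z v ∈ p) ∧ (∀ v ∈ p, d.X v ∈ p)

/-- Indecomposability: nonzero, and not the direct sum of two nonzero submodules. -/
def Datum.Indec (d : Datum k V) : Prop :=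
  Nontrivial V ∧ ∀ p p' : Submodule k V,
    d.Invariant p → d.Invariant p' → IsCompl p p' → p = ⊥ ∨ p' = ⊥

end

universe u v
section AuxLemmas

variable {k : Type u} [Field k] {V : Type v} [AddCommGroup V] [Module k V]

lemma aux_exists_dual (w : V) (hw : w ≠ 0) : ∃ g : V →ₗ[k] k, g w = 1 := by
  obtain ⟨C, hC⟩ := (Submodule.span k {w}).exists_isCompl
  refine ⟨(LinearEquiv.toSpanNonzeroSingleton k V w hw).symm.toLinearMap ∘ₗ
    Submodule.linearProjOfIsCompl _ _ hC, ?_⟩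
  have h1 : (Submodule.linearProjOfIsCompl _ _ hC) w =
      ⟨w, Submodule.mem_span_singleton_self w⟩ :=
    Submodule.linearProjOfIsCompl_apply_left hC ⟨w, Submodule.mem_span_singleton_self w⟩
  simp only [LinearMap.comp_apply, h1, LinearEquiv.coe_coe]
  apply (LinearEquiv.toSpanNonzeroSingleton k V w hw).injective
  rw [LinearEquiv.apply_symm_apply, LinearEquiv.toSpanNonzeroSingleton_one]

lemma aux_exists_dual2 (v w : V) (hw : w ∉ Submodule.span k {v}) :
    ∃ g : V →ₗ[k] k, g v = 0 ∧ g w = 1 := by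
  set p := Submodule.span k {v}
  have hwq : p.mkQ w ≠ 0 := by
    simpa [Submodule.Quotient.mk_eq_zero] using hw
  obtain ⟨g0, hg0⟩ := aux_exists_dual (k := k) (p.mkQ w) hwq
  refine ⟨g0 ∘ₗ p.mkQ, ?_, by simpa using hg0⟩
  have : p.mkQ v = 0 := by
    rw [Submodule.mkQ_apply, Submodule.Quotient.mk_eq_zero]
    exact Submodule.mem_span_singleton_self v
  simp [this]

lemma aux_idem (d : Datum k V) (hind : d.Indec) (π : Module.End k V)
    (hpp : ∀ u, π (π u) = π u)
    (hz : ∀ u, π (d.Z u) = d.Z (π u))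
    (hx : ∀ u, π (d.X u) = d.X (π u)) :
    (∀ u, π u = 0) ∨ (∀ u, π u = u) := by
  have hinv1 : d.Invariant (LinearMap.ker π) := by
    constructor
    · intro u hu
      simp only [LinearMap.mem_ker] at hu ⊢
      rw [hz, hu, map_zero]
    · intro u hu
      simp only [LinearMap.mem_ker] at hu ⊢
      rw [hx, hu, map_zero]
  have hinv2 : d.Invariant (LinearMap.range π) := by
    constructor
    · rintro u ⟨y, rfl⟩
      exact ⟨d.Z y, hz y⟩
    · rintro u ⟨y, rfl⟩
      exact ⟨d.X y, hx y⟩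
  have hcompl : IsCompl (LinearMap.ker π) (LinearMap.range π) := by
    constructor
    · rw [disjoint_iff]
      rw [Submodule.eq_bot_iff]
      intro u hu
      have h1 := (Submodule.mem_inf.mp hu).1
      obtain ⟨y, rfl⟩ := (Submodule.mem_inf.mp hu).2
      rw [LinearMap.mem_ker] at h1
      rw [← hpp y, h1]
    · rw [codisjoint_iff, eq_top_iff]
      intro u _
      rw [Submodule.mem_sup]
      exact ⟨u - π u, by simp [LinearMap.mem_ker, map_sub, hpp], π u, ⟨u, rfl⟩, by abel⟩
  rcases hind.2 _ _ hinv1 hinv2 hcompl with h | h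
  · right
    intro u
    have : π u - u ∈ LinearMap.ker π := by simp [LinearMap.mem_ker, map_sub, hpp]
    rw [h, Submodule.mem_bot, sub_eq_zero] at this
    exact this
  · left
    intro u
    have : π u ∈ LinearMap.range π := ⟨u, rfl⟩
    rwa [h, Submodule.mem_bot] at this

end AuxLemmas
section AuxQ

variable {k : Type u} [Field k] {V : Type v} [AddCommGroup V] [Module k V]

lemma aux_shift {M : Type*} [AddCommGroup M] (m : ℕ) (f : ℕ → M) (hper : f m = f 0) :
    ∑ j ∈ Finset.range m, f (j + 1) = ∑ j ∈ Finset.range m, f j := by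
  have h1 := Finset.sum_range_succ' f m
  have h2 := Finset.sum_range_succ f m
  rw [h2, hper] at h1
  exact add_right_cancel h1.symm

lemma aux_root_pow {q : k} {m : ℕ} (hq2n : q ^ m = 1) (i : ℕ) : (q ^ i) ^ m = 1 := by
  rw [← pow_mul, mul_comm, pow_mul, hq2n, one_pow]

lemma aux_root_pow_inv {q : k} {m : ℕ} (hq2n : q ^ m = 1) (i : ℕ) :
    ((q ^ i)⁻¹) ^ m = 1 := by
  rw [inv_pow, aux_root_pow hq2n, inv_one]

/-- The eigenprojection of `Z` for the eigenvalue `q ^ i`. -/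
noncomputable def auxQ (n : ℕ) (q : k) (d : Datum k V) (i : ℕ) : Module.End k V :=
  (2 * n : k)⁻¹ • ∑ j ∈ Finset.range (2 * n), ((q ^ i)⁻¹ ^ j) • d.Z ^ j

variable {n : ℕ} {q : k} {d : Datum k V}

lemma aux_Z_mul_Q (hn : 1 ≤ n) (hq : IsPrimitiveRoot q (2 * n))
    (hZ1 : d.Z ^ (2 * n) = 1) (i : ℕ) :
    d.Z * auxQ n q d i = q ^ i • auxQ n q d i := by
  have hq0 : q ≠ 0 := hq.ne_zero (by omega)
  have hqi : q ^ i ≠ 0 := pow_ne_zero _ hq0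
  have hq2n : q ^ (2 * n) = 1 := hq.pow_eq_one
  set c : k := (q ^ i)⁻¹ with hc
  have hcpow : c ^ (2 * n) = 1 := aux_root_pow_inv hq2n i
  unfold auxQ
  rw [mul_smul_comm, smul_comm (q ^ i) ((2 * n : k)⁻¹)]
  congr 1
  rw [Finset.mul_sum, Finset.smul_sum]
  calc ∑ j ∈ Finset.range (2 * n), d.Z * (c ^ j • d.Z ^ j)
      = ∑ j ∈ Finset.range (2 * n), c ^ j • d.Z ^ (j + 1) := by
        refine Finset.sum_congr rfl fun j _ => ?_
        rw [mul_smul_comm, ← pow_succ']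
    _ = ∑ j ∈ Finset.range (2 * n), q ^ i • (c ^ (j + 1) • d.Z ^ (j + 1)) := by
        refine Finset.sum_congr rfl fun j _ => ?_
        rw [smul_smul]
        congr 1
        rw [pow_succ, hc]
        field_simp
    _ = ∑ j ∈ Finset.range (2 * n), q ^ i • (c ^ j • d.Z ^ j) := by
        apply aux_shift (2 * n) (fun j => q ^ i • (c ^ j • d.Z ^ j))
        simp only [hcpow, hZ1, pow_zero, one_smul]

lemma aux_Q_mul_Z (i : ℕ) : auxQ n q d i * d.Z = d.Z * auxQ n q d i := by
  unfold auxQ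
  rw [mul_smul_comm, smul_mul_assoc]
  congr 1
  rw [Finset.sum_mul, Finset.mul_sum]
  refine Finset.sum_congr rfl fun j _ => ?_
  rw [smul_mul_assoc, mul_smul_comm, ← pow_succ, ← pow_succ']

lemma aux_Zpow_mul_Q (hn : 1 ≤ n) (hq : IsPrimitiveRoot q (2 * n))
    (hZ1 : d.Z ^ (2 * n) = 1) (i m : ℕ) :
    d.Z ^ m * auxQ n q d i = (q ^ i) ^ m • auxQ n q d i := by
  induction m with
  | zero => simp
  | succ m ih =>
    rw [pow_succ, mul_assoc, aux_Z_mul_Q hn hq hZ1, mul_smul_comm, ih, smul_smul,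
      pow_succ, mul_comm (q ^ i)]

lemma aux_Q_mul_Q (hn : 1 ≤ n) (hq : IsPrimitiveRoot q (2 * n))
    (hZ1 : d.Z ^ (2 * n) = 1) (i j : ℕ) :
    auxQ n q d j * auxQ n q d i =
      ((2 * n : k)⁻¹ * ∑ m ∈ Finset.range (2 * n), (q ^ i * (q ^ j)⁻¹) ^ m) • auxQ n q d i := by
  conv_lhs => rw [auxQ]
  rw [smul_mul_assoc, Finset.sum_mul]
  have hco : ∀ m ∈ Finset.range (2 * n),
      ((q ^ j)⁻¹ ^ m • d.Z ^ m) * auxQ n q d i = (q ^ i * (q ^ j)⁻¹) ^ m • auxQ n q d i := by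
    intro m _
    rw [smul_mul_assoc, aux_Zpow_mul_Q hn hq hZ1, smul_smul, mul_pow, mul_comm]
  rw [Finset.sum_congr rfl hco, ← Finset.sum_smul, smul_smul]

lemma aux_Q_idem (hn : 1 ≤ n) (h2n : (2 * n : k) ≠ 0) (hq : IsPrimitiveRoot q (2 * n))
    (hZ1 : d.Z ^ (2 * n) = 1) (i : ℕ) :
    auxQ n q d i * auxQ n q d i = auxQ n q d i := by
  have hq0 : q ≠ 0 := hq.ne_zero (by omega)
  have hqi : q ^ i ≠ 0 := pow_ne_zero _ hq0
  rw [aux_Q_mul_Q hn hq hZ1, mul_inv_cancel₀ hqi]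
  simp only [one_pow, Finset.sum_const, Finset.card_range, nsmul_eq_mul, mul_one]
  rw [show ((2 * n : ℕ) : k) = (2 * n : k) by push_cast; ring]
  rw [inv_mul_cancel₀ h2n, one_smul]

lemma aux_Q_mul_Q_ne (hn : 1 ≤ n) (hq : IsPrimitiveRoot q (2 * n))
    (hZ1 : d.Z ^ (2 * n) = 1) {i j : ℕ} (hne : q ^ i ≠ q ^ j) :
    auxQ n q d j * auxQ n q d i = 0 := by
  have hq0 : q ≠ 0 := hq.ne_zero (by omega)
  have hqj : q ^ j ≠ 0 := pow_ne_zero _ hq0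
  have hq2n : q ^ (2 * n) = 1 := hq.pow_eq_one
  set x : k := q ^ i * (q ^ j)⁻¹ with hx
  have hx1 : x ≠ 1 := by
    intro h
    apply hne
    rw [hx, mul_inv_eq_one₀ hqj] at h
    exact h
  have hxpow : x ^ (2 * n) = 1 := by
    rw [hx, mul_pow, aux_root_pow hq2n, aux_root_pow_inv hq2n, one_mul]
  rw [aux_Q_mul_Q hn hq hZ1, geom_sum_eq hx1, hxpow]
  simp

lemma aux_sum_Q (hn : 1 ≤ n) (h2n : (2 * n : k) ≠ 0) (hq : IsPrimitiveRoot q (2 * n)) :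
    ∑ i ∈ Finset.range (2 * n), auxQ n q d i = 1 := by
  have hq0 : q ≠ 0 := hq.ne_zero (by omega)
  have hq2n : q ^ (2 * n) = 1 := hq.pow_eq_one
  unfold auxQ
  rw [← Finset.smul_sum, Finset.sum_comm]
  have hswap : ∀ j ∈ Finset.range (2 * n),
      ∑ i ∈ Finset.range (2 * n), (q ^ i)⁻¹ ^ j • d.Z ^ j
        = (∑ i ∈ Finset.range (2 * n), ((q ^ j)⁻¹) ^ i) • d.Z ^ j := by
    intro j _
    rw [Finset.sum_smul]
    refine Finset.sum_congr rfl fun i _ => ?_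
    congr 1
    rw [← inv_pow, ← pow_mul, mul_comm i j, pow_mul, inv_pow]
  rw [Finset.sum_congr rfl hswap]
  rw [Finset.sum_eq_single_of_mem 0 (Finset.mem_range.mpr (by omega))]
  · simp only [pow_zero, inv_one, one_pow, Finset.sum_const, Finset.card_range, nsmul_eq_mul,
      mul_one]
    rw [smul_smul]
    rw [show ((2 * n : ℕ) : k) = (2 * n : k) by push_cast; ring]
    rw [inv_mul_cancel₀ h2n, one_smul]
  · intro j hj hj0
    have hqj : q ^ j ≠ 1 := hq.pow_ne_one_of_pos_of_lt (by omega) (Finset.mem_range.mp hj)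
    have hx1 : (q ^ j)⁻¹ ≠ 1 := by
      simpa [inv_eq_one] using hqj
    have hxpow : ((q ^ j)⁻¹) ^ (2 * n) = 1 := aux_root_pow_inv hq2n j
    rw [geom_sum_eq hx1, hxpow]
    simp

lemma aux_X_mul_Zpow (hq0 : q ≠ 0) (hZX : d.Z * d.X = q • (d.X * d.Z)) (j : ℕ) :
    d.X * d.Z ^ j = (q⁻¹) ^ j • (d.Z ^ j * d.X) := by
  have hXZ : d.X * d.Z = q⁻¹ • (d.Z * d.X) := by
    rw [hZX, smul_smul, inv_mul_cancel₀ hq0, one_smul]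
  induction j with
  | zero => simp
  | succ j ih =>
    rw [pow_succ, ← mul_assoc, ih, smul_mul_assoc, mul_assoc, hXZ, mul_smul_comm,
      smul_smul, ← pow_succ, ← mul_assoc]

lemma aux_X_mul_Q (hq0 : q ≠ 0) (hZX : d.Z * d.X = q • (d.X * d.Z)) (i : ℕ) :
    d.X * auxQ n q d i = auxQ n q d (i + 1) * d.X := by
  unfold auxQ
  rw [mul_smul_comm, smul_mul_assoc]
  congr 1
  rw [Finset.mul_sum, Finset.sum_mul]
  refine Finset.sum_congr rfl fun j _ => ?_
  rw [mul_smul_comm, aux_X_mul_Zpow hq0 hZX, smul_smul, smul_mul_assoc]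
  congr 1
  rw [← mul_pow, ← mul_inv, ← pow_succ]

end AuxQ
section AuxIso

variable {k : Type u} [Field k] {V : Type v} [AddCommGroup V] [Module k V]

lemma aux_MZ (c₀ c₁ : k) (y : Fin 2 → k) :
    Matrix.toLin' !![c₀, 0; 0, c₁] y = ![c₀ * y 0, c₁ * y 1] := by
  funext j
  fin_cases j <;>
    simp [Matrix.toLin'_apply, Matrix.mulVec, dotProduct, Fin.sum_univ_two]

lemma aux_MX (y : Fin 2 → k) :
    Matrix.toLin' !![(0:k), 0; 1, 0] y = ![0, y 0] := by
  funext j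
  fin_cases j <;>
    simp [Matrix.toLin'_apply, Matrix.mulVec, dotProduct, Fin.sum_univ_two]

lemma aux_iso_one (d : Datum k V) (t : Datum k k) (c : k)
    (htZ : ∀ a : k, t.Z a = c * a) (htX : ∀ a : k, t.X a = 0)
    (g : V →ₗ[k] k) (v : V) (hgv : g v = 1)
    (hall : ∀ u, u = g u • v)
    (hgZ : ∀ u, g (d.Z u) = c * g u)
    (hgX : ∀ u, g (d.X u) = 0) : d.Iso t := by
  refine ⟨LinearEquiv.ofLinear g (LinearMap.toSpanSingleton k V v) ?_ ?_, ?_, ?_⟩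
  · ext a
    simp [LinearMap.toSpanSingleton_apply, map_smul, hgv]
  · ext u
    simp only [LinearMap.coe_comp, Function.comp_apply, LinearMap.toSpanSingleton_apply,
      LinearMap.id_coe, id_eq]
    exact (hall u).symm
  · intro u
    simp only [LinearEquiv.ofLinear_apply]
    rw [hgZ, htZ]
  · intro u
    simp only [LinearEquiv.ofLinear_apply]
    rw [hgX, htX]

lemma aux_iso_two (d : Datum k V) (t : Datum k (Fin 2 → k)) (c₀ c₁ : k)
    (htZ : ∀ y, t.Z y = ![c₀ * y 0, c₁ * y 1])
    (htX : ∀ y, t.X y = ![0, y 0])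
    (g : V →ₗ[k] k) (v w : V)
    (hgv : g v = 0) (hgw : g w = 1)
    (hXv : d.X v = w) (hXw : d.X w = 0)
    (hall : ∀ u, u = g (d.X u) • v + g u • w)
    (hgZ : ∀ u, g (d.Z u) = c₁ * g u)
    (hgZX : ∀ u, g (d.X (d.Z u)) = c₀ * g (d.X u))
    (hgXX : ∀ u, g (d.X (d.X u)) = 0) : d.Iso t := by
  set F : V →ₗ[k] (Fin 2 → k) := LinearMap.pi ![g ∘ₗ d.X, g] with hF
  have hFapp : ∀ u, F u = ![g (d.X u), g u] := by
    intro u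
    funext j
    fin_cases j <;> simp [hF, LinearMap.pi_apply]
  set G : (Fin 2 → k) →ₗ[k] V :=
    LinearMap.toSpanSingleton k V v ∘ₗ LinearMap.proj 0 +
      LinearMap.toSpanSingleton k V w ∘ₗ LinearMap.proj 1 with hG
  have hGapp : ∀ y : Fin 2 → k, G y = y 0 • v + y 1 • w := by
    intro y
    simp [hG, LinearMap.toSpanSingleton_apply]
  refine ⟨LinearEquiv.ofLinear F G ?_ ?_, ?_, ?_⟩
  · refine LinearMap.ext fun y => ?_
    rw [LinearMap.comp_apply, hGapp, hFapp]
    simp only [map_add, map_smul, hXv, hXw, smul_zero, add_zero, hgv, hgw]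
    funext j
    fin_cases j <;> simp [map_add, map_smul, hXv, hXw, hgv, hgw]
  · refine LinearMap.ext fun u => ?_
    rw [LinearMap.comp_apply, hFapp, hGapp]
    simp only [Matrix.cons_val_zero, Matrix.cons_val_one, Matrix.head_cons, LinearMap.id_coe,
      id_eq]
    exact (hall u).symm
  · intro u
    simp only [LinearEquiv.ofLinear_apply]
    rw [hFapp, hFapp, htZ]
    funext j
    fin_cases j <;> simp [hgZX, hgZ]
  · intro u
    simp only [LinearEquiv.ofLinear_apply]
    rw [hFapp, hFapp, htX]
    funext j
    fin_cases j <;> simp [hgXX]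

end AuxIso
section AuxComplete

variable {k : Type u} [Field k] [CharZero k]

lemma aux_complete {n : ℕ} (hn : 1 ≤ n) {q : k} (hq : IsPrimitiveRoot q (2 * n))
    (V : Type v) [AddCommGroup V] [Module k V]
    (d : Datum k V) (hrep : d.IsWRep n q) (hind : d.Indec) :
    (∃ i : ℕ, i < 2 * n ∧ Datum.Iso d (Datum.S q (i : ℤ))) ∨
    (∃ i : ℕ, i < 2 * n ∧ Datum.Iso d (Datum.M q (i : ℤ))) ∨
    Datum.Iso d (Datum.N0 (k := k)) ∨ Datum.Iso d (Datum.N1 (k := k)) := by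
  obtain ⟨hZrel, hZX, hX2⟩ := hrep
  have hq0 : q ≠ 0 := hq.ne_zero (by omega)
  have hq2n : q ^ (2 * n) = 1 := hq.pow_eq_one
  have h2nk : (2 * n : k) ≠ 0 := by
    have : ((2 * n : ℕ) : k) ≠ 0 := Nat.cast_ne_zero.mpr (by omega)
    push_cast at this
    exact this
  have hXX : ∀ u, d.X (d.X u) = 0 := by
    intro u
    have : (d.X * d.X) u = (0 : Module.End k V) u := by rw [← pow_two, hX2]
    simpa using this
  -- the idempotent P = Z^{2n}
  set P : Module.End k V := d.Z ^ (2 * n) with hP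
  have hPP : P * P = P := by
    rw [hP, ← pow_add]
    have h1 : 2 * n + 2 * n = (2 * n - 1) + (2 * n + 1) := by omega
    rw [h1, pow_add, hZrel, ← pow_succ]
    congr 1
    omega
  have hPZ : P * d.Z = d.Z * P := by
    rw [hP, ← pow_succ, ← pow_succ']
  have hPX : P * d.X = d.X * P := by
    have h := aux_X_mul_Zpow hq0 hZX (2 * n)
    rw [hP, h, inv_pow, hq2n, inv_one, one_smul]
  rcases aux_idem d hind P (fun u => by rw [← Module.End.mul_apply, hPP])
      (fun u => by rw [← Module.End.mul_apply, hPZ, Module.End.mul_apply])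
      (fun u => by rw [← Module.End.mul_apply, hPX, Module.End.mul_apply]) with hP0 | hP1
  · -- case P = 0, so Z = 0
    have hZ0 : ∀ u, d.Z u = 0 := by
      intro u
      have h1 : d.Z u = (d.Z ^ (2 * n + 1)) u := by rw [hZrel]
      rw [pow_succ', Module.End.mul_apply] at h1
      rw [h1, ← hP, hP0 u]
      exact map_zero d.Z
    by_cases hX0 : ∀ u, d.X u = 0
    · -- N0
      right; right; left
      obtain ⟨v0, hv0⟩ := @exists_ne V hind.1 0
      obtain ⟨g0, hg0⟩ := aux_exists_dual (k := k) v0 hv0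
      set π : Module.End k V := LinearMap.toSpanSingleton k V v0 ∘ₗ g0 with hπ
      have hπapp : ∀ u, π u = g0 u • v0 := fun u => rfl
      rcases aux_idem d hind π
          (fun u => by simp [hπapp, map_smul, hg0, smul_smul])
          (fun u => by simp only [hZ0, map_zero])
          (fun u => by simp only [hX0, map_zero]) with h0 | h1
      · exfalso
        apply hv0
        have h2 := h0 v0
        rwa [hπapp, hg0, one_smul] at h2
      · refine aux_iso_one d _ 0 (fun a => by simp [Datum.N0]) (fun a => by simp [Datum.N0])
          g0 v0 hg0 (fun u => (h1 u).symm) (fun u => by rw [hZ0]; simp)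
          (fun u => by rw [hX0]; simp)
    · -- N1
      right; right; right
      push_neg at hX0
      obtain ⟨v, hv⟩ := hX0
      set w : V := d.X v with hw
      have hw0 : w ≠ 0 := hv
      have hXw : d.X w = 0 := hXX v
      have hwv : w ∉ Submodule.span k {v} := by
        intro hmem
        obtain ⟨c, hc⟩ := Submodule.mem_span_singleton.mp hmem
        have h1 : d.X w = c • w := by rw [← hc, map_smul, ← hw, hc]
        rw [hXw] at h1
        rcases smul_eq_zero.mp h1.symm with h2 | h2
        · rw [h2, zero_smul] at hc
          exact hw0 hc.symm
        · exact hw0 h2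
      obtain ⟨g, hgv, hgw⟩ := aux_exists_dual2 (k := k) v w hwv
      set π : Module.End k V := LinearMap.toSpanSingleton k V v ∘ₗ (g ∘ₗ d.X) +
          LinearMap.toSpanSingleton k V w ∘ₗ g with hπ
      have hπapp : ∀ u, π u = g (d.X u) • v + g u • w := fun u => rfl
      have hXπ : ∀ u, d.X (π u) = g (d.X u) • w := by
        intro u
        rw [hπapp, map_add, map_smul, map_smul, ← hw, hXw, smul_zero, add_zero]
      have hgπ : ∀ u, g (π u) = g u := by
        intro u
        rw [hπapp, map_add, map_smul, map_smul, hgv, hgw, smul_eq_mul, smul_eq_mul,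
          mul_zero, mul_one, zero_add]
      have hgXπ : ∀ u, g (d.X (π u)) = g (d.X u) := by
        intro u
        rw [hXπ, map_smul, hgw, smul_eq_mul, mul_one]
      rcases aux_idem d hind π
          (fun u => by rw [hπapp (π u), hgXπ, hgπ, hπapp u])
          (fun u => by simp only [hZ0, map_zero])
          (fun u => by
            rw [hπapp (d.X u), hXX, map_zero, zero_smul, zero_add, hXπ])
          with h0 | h1
      · exfalso
        apply hw0
        have h2 := h0 w
        rwa [hπapp, hXw, map_zero, zero_smul, zero_add, hgw, one_smul] at h2
      · refine aux_iso_two d _ 0 0 ?_ ?_ g v w hgv hgw rfl hXw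
          (fun u => (h1 u).symm) (fun u => by rw [hZ0]; simp)
          (fun u => by rw [hZ0]; simp) (fun u => by rw [hXX, map_zero])
        · intro y
          show (0 : Module.End k (Fin 2 → k)) y = _
          funext j
          fin_cases j <;> simp
        · intro y
          show Matrix.toLin' !![(0:k), 0; 1, 0] y = _
          exact aux_MX y
  · -- case P = 1, i.e. Z^{2n} = 1
    have hZ1 : d.Z ^ (2 * n) = 1 := LinearMap.ext fun u => hP1 u
    have hsum := aux_sum_Q (d := d) hn h2nk hq
    -- pointwise helper lemmas
    have hQidem : ∀ (j : ℕ) (u : V), auxQ n q d j (auxQ n q d j u) = auxQ n q d j u := by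
      intro j u
      have h := LinearMap.ext_iff.mp (aux_Q_idem (d := d) hn h2nk hq hZ1 j) u
      simpa using h
    have hZQ : ∀ (j : ℕ) (u : V), d.Z (auxQ n q d j u) = q ^ j • auxQ n q d j u := by
      intro j u
      have h := LinearMap.ext_iff.mp (aux_Z_mul_Q (d := d) hn hq hZ1 j) u
      simpa using h
    have hQZ : ∀ (j : ℕ) (u : V), auxQ n q d j (d.Z u) = q ^ j • auxQ n q d j u := by
      intro j u
      have h := LinearMap.ext_iff.mp
        ((aux_Q_mul_Z (d := d) (n := n) (q := q) j).trans (aux_Z_mul_Q hn hq hZ1 j)) u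
      simpa using h
    have hXQ : ∀ (j : ℕ) (u : V), d.X (auxQ n q d j u) = auxQ n q d (j + 1) (d.X u) := by
      intro j u
      have h := LinearMap.ext_iff.mp (aux_X_mul_Q (d := d) (n := n) hq0 hZX j) u
      simpa using h
    by_cases hX0 : ∀ u, d.X u = 0
    · -- S i
      left
      obtain ⟨v0, hv0⟩ := @exists_ne V hind.1 0
      have hsv : ∑ i ∈ Finset.range (2 * n), auxQ n q d i v0 = v0 := by
        rw [← LinearMap.sum_apply, hsum, Module.End.one_apply]
      obtain ⟨i, hi, hQi⟩ := Finset.exists_ne_zero_of_sum_ne_zero (by rw [hsv]; exact hv0)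
      rw [Finset.mem_range] at hi
      set v : V := auxQ n q d i v0 with hvdef
      have hQv : auxQ n q d i v = v := hQidem i v0
      have hZv : d.Z v = q ^ i • v := hZQ i v0
      obtain ⟨g0, hg0⟩ := aux_exists_dual (k := k) v hQi
      set g : V →ₗ[k] k := g0 ∘ₗ auxQ n q d i with hg
      have hgv : g v = 1 := by rw [hg, LinearMap.comp_apply, hQv, hg0]
      have hgZ : ∀ u, g (d.Z u) = q ^ i * g u := by
        intro u
        rw [hg, LinearMap.comp_apply, hQZ, map_smul, smul_eq_mul, LinearMap.comp_apply]
      set π : Module.End k V := LinearMap.toSpanSingleton k V v ∘ₗ g with hπ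
      have hπapp : ∀ u, π u = g u • v := fun u => rfl
      rcases aux_idem d hind π
          (fun u => by simp [hπapp, map_smul, hgv, smul_smul])
          (fun u => by
            rw [hπapp, hπapp, hgZ, map_smul, hZv, smul_smul, mul_comm])
          (fun u => by simp only [hX0, map_zero]) with h0 | h1
      · exfalso
        apply hQi
        have h2 := h0 v
        rwa [hπapp, hgv, one_smul] at h2
      · refine ⟨i, hi, ?_⟩
        have hzc : (q : k) ^ (i : ℤ) = q ^ i := zpow_natCast q i
        refine aux_iso_one d _ (q ^ (i : ℤ))
          (fun a => ?_) (fun a => by simp [Datum.S]) g v hgv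
          (fun u => (h1 u).symm) (fun u => by rw [hgZ, hzc]) (fun u => by rw [hX0]; simp)
        show (q ^ (i : ℤ) • (1 : Module.End k k)) a = q ^ (i : ℤ) * a
        rw [LinearMap.smul_apply, Module.End.one_apply, smul_eq_mul]
    · -- M i
      right; left
      push_neg at hX0
      obtain ⟨v0, hv0⟩ := hX0
      have hsv : ∑ i ∈ Finset.range (2 * n), d.X (auxQ n q d i v0) = d.X v0 := by
        rw [← map_sum, ← LinearMap.sum_apply, hsum, Module.End.one_apply]
      obtain ⟨i, hi, hXQi⟩ := Finset.exists_ne_zero_of_sum_ne_zero (by rw [hsv]; exact hv0)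
      rw [Finset.mem_range] at hi
      set v : V := auxQ n q d i v0 with hvdef
      set w : V := d.X v with hwdef
      have hw0 : w ≠ 0 := hXQi
      have hXw : d.X w = 0 := hXX v
      have hqine : q ^ i ≠ q ^ (i + 1) := by
        intro h
        rw [pow_succ] at h
        have h2 : q ^ i * 1 = q ^ i * q := by rw [mul_one]; exact h
        have := mul_left_cancel₀ (pow_ne_zero i hq0) h2
        exact hq.ne_one (by omega) this.symm
      have hQv : auxQ n q d i v = v := hQidem i v0
      have hZv : d.Z v = q ^ i • v := hZQ i v0
      have hwQ : w = auxQ n q d (i + 1) (d.X v0) := hXQ i v0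
      have hQw : auxQ n q d (i + 1) w = w := by
        conv_lhs => rw [hwQ]
        rw [hQidem, ← hwQ]
      have hZw : d.Z w = q ^ (i + 1) • w := by
        conv_lhs => rw [hwQ]
        rw [hZQ, ← hwQ]
      have hQvz : auxQ n q d (i + 1) v = 0 := by
        have h := LinearMap.ext_iff.mp (aux_Q_mul_Q_ne (d := d) hn hq hZ1 hqine) v0
        simpa using h
      obtain ⟨g0, hg0⟩ := aux_exists_dual (k := k) w hw0
      set g : V →ₗ[k] k := g0 ∘ₗ auxQ n q d (i + 1) with hg
      have hgw : g w = 1 := by rw [hg, LinearMap.comp_apply, hQw, hg0]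
      have hgv : g v = 0 := by rw [hg, LinearMap.comp_apply, hQvz, map_zero]
      have hgZ : ∀ u, g (d.Z u) = q ^ (i + 1) * g u := by
        intro u
        rw [hg, LinearMap.comp_apply, hQZ, map_smul, smul_eq_mul, LinearMap.comp_apply]
      have hXZq : ∀ u, d.X (d.Z u) = q⁻¹ • d.Z (d.X u) := by
        intro u
        have h1 : (d.Z * d.X) u = (q • (d.X * d.Z)) u := by rw [hZX]
        rw [Module.End.mul_apply, LinearMap.smul_apply, Module.End.mul_apply] at h1
        rw [h1, smul_smul, inv_mul_cancel₀ hq0, one_smul]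
      have hgZX : ∀ u, g (d.X (d.Z u)) = q ^ i * g (d.X u) := by
        intro u
        rw [hXZq, map_smul, hgZ, smul_eq_mul, pow_succ]
        field_simp
      set π : Module.End k V := LinearMap.toSpanSingleton k V v ∘ₗ (g ∘ₗ d.X) +
          LinearMap.toSpanSingleton k V w ∘ₗ g with hπ
      have hπapp : ∀ u, π u = g (d.X u) • v + g u • w := fun u => rfl
      have hXπ : ∀ u, d.X (π u) = g (d.X u) • w := by
        intro u
        rw [hπapp, map_add, map_smul, map_smul, ← hwdef, hXw, smul_zero, add_zero]
      have hgπ : ∀ u, g (π u) = g u := by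
        intro u
        rw [hπapp, map_add, map_smul, map_smul, hgv, hgw, smul_eq_mul, smul_eq_mul,
          mul_zero, mul_one, zero_add]
      have hgXπ : ∀ u, g (d.X (π u)) = g (d.X u) := by
        intro u
        rw [hXπ, map_smul, hgw, smul_eq_mul, mul_one]
      rcases aux_idem d hind π
          (fun u => by rw [hπapp (π u), hgXπ, hgπ, hπapp u])
          (fun u => by
            rw [hπapp (d.Z u), hπapp u, map_add, map_smul, map_smul, hZv, hZw,
              hgZX, hgZ, smul_smul, smul_smul,
              mul_comm (g (d.X u)) (q ^ i), mul_comm (g u) (q ^ (i + 1))])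
          (fun u => by
            rw [hπapp (d.X u), hXX, map_zero, zero_smul, zero_add, hXπ])
          with h0 | h1
      · exfalso
        apply hw0
        have h2 := h0 w
        rwa [hπapp, hXw, map_zero, zero_smul, zero_add, hgw, one_smul] at h2
      · refine ⟨i, hi, ?_⟩
        have hzc : (q : k) ^ (i : ℤ) = q ^ i := zpow_natCast q i
        have hzc1 : (q : k) ^ ((i : ℤ) + 1) = q ^ (i + 1) := by
          rw [show ((i : ℤ) + 1) = ((i + 1 : ℕ) : ℤ) by push_cast; ring, zpow_natCast]
        refine aux_iso_two d _ (q ^ (i : ℤ)) (q ^ ((i : ℤ) + 1)) ?_ ?_ g v w hgv hgw rfl hXw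
          (fun u => (h1 u).symm) (fun u => by rw [hgZ, hzc1]) (fun u => by rw [hgZX, hzc])
          (fun u => by rw [hXX, map_zero])
        · intro y
          show Matrix.toLin' !![q ^ (i:ℤ), 0; 0, q ^ ((i:ℤ) + 1)] y = _
          exact aux_MZ _ _ y
        · intro y
          show Matrix.toLin' !![(0:k), 0; 1, 0] y = _
          exact aux_MX y

end AuxComplete
section AuxForward

variable {k : Type u} [Field k]

lemma aux_mat_one : (!![(1:k), 0; 0, 1]) = (1 : Matrix (Fin 2) (Fin 2) k) := by
  ext i j
  fin_cases i <;> fin_cases j <;> simp [Matrix.one_apply]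

lemma aux_mat_mul_diag (a b c₀ c₁ : k) :
    !![a, 0; 0, b] * !![c₀, 0; 0, c₁] = !![a * c₀, 0; 0, b * c₁] := by
  ext i j
  fin_cases i <;> fin_cases j <;> simp [Matrix.mul_apply, Fin.sum_univ_two]

lemma aux_mat_ZX (a b : k) :
    !![a, 0; 0, b] * !![0, 0; 1, 0] = !![0, 0; b, 0] := by
  ext i j
  fin_cases i <;> fin_cases j <;> simp [Matrix.mul_apply, Fin.sum_univ_two]

lemma aux_mat_XZ (a b : k) :
    !![0, 0; 1, 0] * !![a, 0; 0, b] = !![0, 0; a, 0] := by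
  ext i j
  fin_cases i <;> fin_cases j <;> simp [Matrix.mul_apply, Fin.sum_univ_two]

lemma aux_mat_smul (c a b e f : k) :
    c • !![a, b; e, f] = !![c * a, c * b; c * e, c * f] := by
  ext i j
  fin_cases i <;> fin_cases j <;> simp

lemma aux_mat_XX : (!![(0:k), 0; 1, 0]) * !![0, 0; 1, 0] = 0 := by
  ext i j
  fin_cases i <;> fin_cases j <;> simp [Matrix.mul_apply, Fin.sum_univ_two]

lemma aux_Xop_sq : (Matrix.toLin' !![(0:k), 0; 1, 0] : Module.End k (Fin 2 → k)) ^ 2 = 0 := by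
  rw [pow_two, Module.End.mul_eq_comp, ← Matrix.toLin'_mul, aux_mat_XX]
  exact map_zero _

lemma aux_diag_pow (a b : k) (m : ℕ) :
    (Matrix.toLin' !![a, 0; 0, b] : Module.End k (Fin 2 → k)) ^ m
      = Matrix.toLin' !![a ^ m, 0; 0, b ^ m] := by
  induction m with
  | zero =>
    rw [pow_zero, pow_zero, pow_zero, aux_mat_one, Matrix.toLin'_one]
    rfl
  | succ m ih =>
    rw [pow_succ, ih, Module.End.mul_eq_comp, ← Matrix.toLin'_mul, aux_mat_mul_diag,
      ← pow_succ, ← pow_succ]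

lemma aux_pow_back {n : ℕ} {q : k} (hq2n : q ^ (2 * n) = 1) (j : ℕ) :
    (q ^ j) ^ (2 * n + 1) = q ^ j := by
  rw [pow_succ, aux_root_pow hq2n, one_mul]

lemma aux_S_wrep {n : ℕ} {q : k} (hq2n : q ^ (2 * n) = 1) (i : ℕ) :
    Datum.IsWRep n q (Datum.S q (i : ℤ)) := by
  refine ⟨?_, ?_, ?_⟩
  · show (q ^ (i : ℤ) • (1 : Module.End k k)) ^ (2 * n + 1) = q ^ (i : ℤ) • 1
    rw [smul_pow, one_pow, zpow_natCast, aux_pow_back hq2n]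
  · show q ^ (i : ℤ) • (1 : Module.End k k) * 0 = q • (0 * (q ^ (i : ℤ) • 1))
    simp
  · show (0 : Module.End k k) ^ 2 = 0
    simp [pow_two]

lemma aux_M_wrep {n : ℕ} {q : k} (hq0 : q ≠ 0) (hq2n : q ^ (2 * n) = 1) (i : ℕ) :
    Datum.IsWRep n q (Datum.M q (i : ℤ)) := by
  have hzc : (q : k) ^ (i : ℤ) = q ^ i := zpow_natCast q i
  have hzc1 : (q : k) ^ ((i : ℤ) + 1) = q ^ (i + 1) := by
    rw [show ((i : ℤ) + 1) = ((i + 1 : ℕ) : ℤ) by push_cast; ring, zpow_natCast]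
  refine ⟨?_, ?_, ?_⟩
  · show (Matrix.toLin' !![q ^ (i:ℤ), 0; 0, q ^ ((i:ℤ) + 1)] : Module.End k (Fin 2 → k))
        ^ (2 * n + 1) = _
    rw [aux_diag_pow, hzc, hzc1, aux_pow_back hq2n, aux_pow_back hq2n, ← hzc, ← hzc1]
    rfl
  · show Matrix.toLin' !![q ^ (i:ℤ), 0; 0, q ^ ((i:ℤ) + 1)] * Matrix.toLin' !![0, 0; 1, 0]
        = q • (Matrix.toLin' !![0, 0; 1, 0] * Matrix.toLin' !![q ^ (i:ℤ), 0; 0, q ^ ((i:ℤ)+1)])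
    rw [Module.End.mul_eq_comp, Module.End.mul_eq_comp, ← Matrix.toLin'_mul, ← Matrix.toLin'_mul,
      aux_mat_ZX, aux_mat_XZ, ← map_smul, aux_mat_smul]
    congr 1
    ext a' b'
    fin_cases a' <;> fin_cases b' <;>
      simp [hzc1, hzc, pow_succ, mul_comm]
  · show (Matrix.toLin' !![(0:k), 0; 1, 0] : Module.End k (Fin 2 → k)) ^ 2 = 0
    exact aux_Xop_sq

lemma aux_N0_wrep {n : ℕ} {q : k} : Datum.IsWRep n q (Datum.N0 (k := k)) := by
  refine ⟨?_, ?_, ?_⟩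
  · show (0 : Module.End k k) ^ (2 * n + 1) = 0
    simp
  · show (0 : Module.End k k) * 0 = q • (0 * 0)
    simp
  · show (0 : Module.End k k) ^ 2 = 0
    simp [pow_two]

lemma aux_N1_wrep {n : ℕ} {q : k} : Datum.IsWRep n q (Datum.N1 (k := k)) := by
  refine ⟨?_, ?_, ?_⟩
  · show (0 : Module.End k (Fin 2 → k)) ^ (2 * n + 1) = 0
    simp
  · show (0 : Module.End k (Fin 2 → k)) * Matrix.toLin' !![0, 0; 1, 0]
        = q • (Matrix.toLin' !![0, 0; 1, 0] * 0)
    simp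
  · exact aux_Xop_sq

lemma aux_sub_k (p : Submodule k k) (hp : p ≠ ⊥) : p = ⊤ := by
  obtain ⟨x, hxp, hx0⟩ := Submodule.exists_mem_ne_zero_of_ne_bot hp
  rw [Submodule.eq_top_iff']
  intro y
  have : y = (y * x⁻¹) • x := by rw [smul_eq_mul, mul_assoc, inv_mul_cancel₀ hx0, mul_one]
  rw [this]
  exact p.smul_mem _ hxp

lemma aux_indec_one (d : Datum k k) : d.Indec := by
  refine ⟨inferInstance, ?_⟩
  intro p p' _ _ hc
  by_contra hcon
  push_neg at hcon
  rw [aux_sub_k p hcon.1, aux_sub_k p' hcon.2] at hc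
  have h1 := hc.disjoint.eq_bot
  rw [inf_idem] at h1
  have : (1 : k) ∈ (⊥ : Submodule k k) := h1 ▸ Submodule.mem_top
  rw [Submodule.mem_bot] at this
  exact one_ne_zero this

lemma aux_X_vanish (d : Datum k (Fin 2 → k)) (hXX : ∀ y, d.X (d.X y) = 0)
    (p : Submodule k (Fin 2 → k)) (hip : d.Invariant p) (hp1 : Module.finrank k p = 1) :
    ∀ y ∈ p, d.X y = 0 := by
  obtain ⟨x, hxp, hx0⟩ := Submodule.exists_mem_ne_zero_of_ne_bot (p := p)
    (by intro h; rw [h, finrank_bot] at hp1; omega)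
  have hspan : Submodule.span k {x} = p := by
    apply Submodule.eq_of_le_of_finrank_le
    · rw [Submodule.span_le, Set.singleton_subset_iff]; exact hxp
    · rw [hp1, finrank_span_singleton hx0]
  have hXx : d.X x = 0 := by
    have hmem : d.X x ∈ p := hip.2 x hxp
    rw [← hspan] at hmem
    obtain ⟨c, hc⟩ := Submodule.mem_span_singleton.mp hmem
    have h0 : c • (c • x) = 0 := by rw [hc, ← map_smul, hc, hXX]
    rcases smul_eq_zero.mp h0 with h2 | h2
    · rw [← hc, h2, zero_smul]
    · rcases smul_eq_zero.mp h2 with h3 | h3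
      · rw [← hc, h3, zero_smul]
      · exact absurd h3 hx0
  intro y hyp
  rw [← hspan] at hyp
  obtain ⟨c, hc⟩ := Submodule.mem_span_singleton.mp hyp
  rw [← hc, map_smul, hXx, smul_zero]

lemma aux_indec_two (d : Datum k (Fin 2 → k)) (hXX : ∀ y, d.X (d.X y) = 0)
    (hXe : d.X ![1, 0] = ![0, 1]) : d.Indec := by
  refine ⟨inferInstance, ?_⟩
  intro p p' hip hip' hc
  by_contra hcon
  push_neg at hcon
  have hsum := Submodule.finrank_add_eq_of_isCompl hc
  rw [Module.finrank_fin_fun] at hsum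
  have hpos : ∀ (r : Submodule k (Fin 2 → k)), r ≠ ⊥ → 0 < Module.finrank k r := by
    intro r hr
    obtain ⟨x, hxr, hx0⟩ := Submodule.exists_mem_ne_zero_of_ne_bot hr
    have h1 : Module.finrank k (Submodule.span k {x}) ≤ Module.finrank k r :=
      Submodule.finrank_mono (by rw [Submodule.span_le, Set.singleton_subset_iff]; exact hxr)
    rw [finrank_span_singleton hx0] at h1
    omega
  have hppos : 0 < Module.finrank k p := hpos p hcon.1
  have hppos' : 0 < Module.finrank k p' := hpos p' hcon.2
  have hp1 : Module.finrank k p = 1 := by omega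
  have hp1' : Module.finrank k p' = 1 := by omega
  have htop : p ⊔ p' = ⊤ := hc.codisjoint.eq_top
  have hmem : (![1, 0] : Fin 2 → k) ∈ p ⊔ p' := htop ▸ Submodule.mem_top
  obtain ⟨y, hy, y', hy', hyy⟩ := Submodule.mem_sup.mp hmem
  have h1 : d.X ![1, 0] = 0 := by
    rw [← hyy, map_add, aux_X_vanish d hXX p hip hp1 y hy,
      aux_X_vanish d hXX p' hip' hp1' y' hy', add_zero]
  rw [hXe] at h1
  have := congrFun h1 1
  simp at this

end AuxForward
section MainAux

variable {k : Type u} [Field k]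

lemma aux_XX_pt (y : Fin 2 → k) :
    Matrix.toLin' !![(0:k), 0; 1, 0] (Matrix.toLin' !![(0:k), 0; 1, 0] y) = 0 := by
  rw [aux_MX, aux_MX]
  funext j
  fin_cases j <;> simp

lemma aux_M_indec (q : k) (i : ℤ) : (Datum.M q i).Indec := by
  refine aux_indec_two _ (fun y => aux_XX_pt y) ?_
  show Matrix.toLin' !![(0:k), 0; 1, 0] ![1, 0] = ![0, 1]
  rw [aux_MX]
  funext j
  fin_cases j <;> simp

lemma aux_N1_indec : (Datum.N1 (k := k)).Indec := by
  refine aux_indec_two _ (fun y => aux_XX_pt y) ?_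
  show Matrix.toLin' !![(0:k), 0; 1, 0] ![1, 0] = ![0, 1]
  rw [aux_MX]
  funext j
  fin_cases j <;> simp

lemma aux_SZ_apply (q : k) (i : ℤ) (a : k) : (Datum.S q i).Z a = q ^ i * a := by
  show (q ^ i • (1 : Module.End k k)) a = q ^ i * a
  rw [LinearMap.smul_apply, Module.End.one_apply, smul_eq_mul]

lemma aux_dim12 {W W' : Type*} [AddCommGroup W] [Module k W] [AddCommGroup W'] [Module k W']
    (d : Datum k W) (e : Datum k W')
    (hne : Module.finrank k W ≠ Module.finrank k W') : ¬ d.Iso e := by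
  rintro ⟨f, -, -⟩
  exact hne f.finrank_eq

end MainAux

/-- the modules `S_i`, `M_i` (`i ∈ ℤ/2n`), `N₀`, `N₁` are pairwise
non-isomorphic indecomposable `A`-modules, and every nonzero finite-dimensional
indecomposable `A`-module is isomorphic to one of them. -/
theorem stmt_10 {k : Type u} [Field k] [CharZero k] [IsAlgClosed k]
    (n : ℕ) (hn : 1 ≤ n) (q : k) (hq : IsPrimitiveRoot q (2 * n)) :
    -- each of the listed data is a module over A, and is indecomposable
    (∀ i : ℕ, i < 2 * n →
        Datum.IsWRep n q (Datum.S q i) ∧ (Datum.S q (i : ℤ) : Datum k k).Indec ∧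
        Datum.IsWRep n q (Datum.M q i) ∧ (Datum.M q (i : ℤ) : Datum k (Fin 2 → k)).Indec) ∧
    (Datum.IsWRep n q (Datum.N0 (k := k)) ∧ (Datum.N0 (k := k)).Indec) ∧
    (Datum.IsWRep n q (Datum.N1 (k := k)) ∧ (Datum.N1 (k := k)).Indec) ∧
    -- pairwise non-isomorphic
    (∀ i : ℕ, i < 2 * n → ∀ j : ℕ, j < 2 * n →
        (Datum.Iso (Datum.S q (i : ℤ)) (Datum.S q (j : ℤ)) → i = j) ∧
        (Datum.Iso (Datum.M q (i : ℤ)) (Datum.M q (j : ℤ)) → i = j) ∧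
        ¬ Datum.Iso (Datum.S q (i : ℤ)) (Datum.M q (j : ℤ))) ∧
    (∀ i : ℕ, i < 2 * n →
        ¬ Datum.Iso (Datum.S q (i : ℤ)) (Datum.N0 (k := k)) ∧
        ¬ Datum.Iso (Datum.S q (i : ℤ)) (Datum.N1 (k := k)) ∧
        ¬ Datum.Iso (Datum.M q (i : ℤ)) (Datum.N0 (k := k)) ∧
        ¬ Datum.Iso (Datum.M q (i : ℤ)) (Datum.N1 (k := k))) ∧
    ¬ Datum.Iso (Datum.N0 (k := k)) (Datum.N1 (k := k)) ∧
    -- completeness: every nonzero finite-dimensional indecomposable module is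
    -- isomorphic to one in the list
    (∀ (V : Type v) [AddCommGroup V] [Module k V] [FiniteDimensional k V]
        (d : Datum k V), Datum.IsWRep n q d → d.Indec →
        (∃ i : ℕ, i < 2 * n ∧ Datum.Iso d (Datum.S q (i : ℤ))) ∨
        (∃ i : ℕ, i < 2 * n ∧ Datum.Iso d (Datum.M q (i : ℤ))) ∨
        Datum.Iso d (Datum.N0 (k := k)) ∨ Datum.Iso d (Datum.N1 (k := k))) := by
  have hq0 : q ≠ 0 := hq.ne_zero (by omega)
  have hq2n : q ^ (2 * n) = 1 := hq.pow_eq_one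
  have hMZ : ∀ (i : ℕ) (y : Fin 2 → k),
      (Datum.M q (i : ℤ)).Z y = ![q ^ (i:ℤ) * y 0, q ^ ((i:ℤ) + 1) * y 1] := by
    intro i y
    show Matrix.toLin' !![q ^ (i:ℤ), 0; 0, q ^ ((i:ℤ) + 1)] y = _
    exact aux_MZ _ _ y
  have hMX : ∀ (i : ℕ) (y : Fin 2 → k), (Datum.M q (i : ℤ)).X y = ![0, y 0] := by
    intro i y
    show Matrix.toLin' !![(0:k), 0; 1, 0] y = _
    exact aux_MX y
  have he2 : (![0, 1] : Fin 2 → k) ≠ 0 := by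
    intro h
    simpa using congrFun h 1
  have he1 : (![1, 0] : Fin 2 → k) ≠ 0 := by
    intro h
    simpa using congrFun h 0
  have hfc : ∀ (c : k), c = c • (1 : k) := by intro c; simp
  refine ⟨?_, ⟨aux_N0_wrep, aux_indec_one _⟩, ⟨aux_N1_wrep, aux_N1_indec⟩, ?_, ?_, ?_, ?_⟩
  · intro i _
    exact ⟨aux_S_wrep hq2n i, aux_indec_one _, aux_M_wrep hq0 hq2n i, aux_M_indec q i⟩
  · -- pairwise among S and M
    intro i hi j hj
    refine ⟨?_, ?_, ?_⟩
    · rintro ⟨f, hfZ, -⟩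
      have h := hfZ 1
      rw [aux_SZ_apply, aux_SZ_apply, mul_one] at h
      rw [hfc (q ^ (i:ℤ)), map_smul, smul_eq_mul] at h
      have hf1 : f 1 ≠ 0 := fun h0 => one_ne_zero (f.map_eq_zero_iff.mp h0)
      have h2 : q ^ (i : ℤ) = q ^ (j : ℤ) := mul_right_cancel₀ hf1 h
      rw [zpow_natCast, zpow_natCast] at h2
      exact hq.pow_inj hi hj h2
    · rintro ⟨f, hfZ, hfX⟩
      -- f e₂ = ![0, a] with a = f e₁ 0
      have hXe1 : (Datum.M q (i:ℤ)).X ![1, 0] = ![0, 1] := by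
        rw [hMX i]
        funext j'
        fin_cases j' <;> simp
      have hfe2 : f ![0, 1] = ![0, f ![1, 0] 0] := by
        rw [← hXe1, hfX, hMX j]
      have hZe2 : (Datum.M q (i:ℤ)).Z ![0, 1] = q ^ ((i:ℤ) + 1) • ![0, 1] := by
        rw [hMZ i]
        funext j'
        fin_cases j' <;> simp
      have h := hfZ ![0, 1]
      rw [hZe2, map_smul, hfe2, hMZ j] at h
      have h1 := congrFun h 1
      simp only [Pi.smul_apply, Matrix.cons_val_one, Matrix.head_cons, smul_eq_mul] at h1
      have ha : f ![1, 0] 0 ≠ 0 := by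
        intro h0
        rw [h0] at hfe2
        apply he2
        apply f.map_eq_zero_iff.mp
        rw [hfe2]
        funext j'
        fin_cases j' <;> simp
      have h2 : q ^ ((i:ℤ) + 1) = q ^ ((j:ℤ) + 1) := mul_right_cancel₀ ha h1
      have h3 : q ^ ((i:ℤ) + 1) = q ^ (i + 1 : ℕ) := by
        rw [show ((i : ℤ) + 1) = ((i + 1 : ℕ) : ℤ) by push_cast; ring, zpow_natCast]
      have h4 : q ^ ((j:ℤ) + 1) = q ^ (j + 1 : ℕ) := by
        rw [show ((j : ℤ) + 1) = ((j + 1 : ℕ) : ℤ) by push_cast; ring, zpow_natCast]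
      rw [h3, h4, pow_succ', pow_succ'] at h2
      have h5 := mul_left_cancel₀ hq0 h2
      exact hq.pow_inj hi hj h5
    · exact aux_dim12 _ _ (by rw [Module.finrank_self, Module.finrank_fin_fun]; omega)
  · -- S/M vs N0/N1
    intro i hi
    refine ⟨?_, ?_, ?_, ?_⟩
    · rintro ⟨f, hfZ, -⟩
      have h := hfZ 1
      rw [aux_SZ_apply, mul_one] at h
      have h2 : (Datum.N0 (k := k)).Z (f 1) = 0 := by
        show (0 : Module.End k k) (f 1) = 0
        simp
      rw [h2] at h
      exact zpow_ne_zero (i : ℤ) hq0 (f.map_eq_zero_iff.mp h)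
    · exact aux_dim12 _ _ (by rw [Module.finrank_self, Module.finrank_fin_fun]; omega)
    · exact aux_dim12 _ _ (by rw [Module.finrank_self, Module.finrank_fin_fun]; omega)
    · rintro ⟨f, hfZ, -⟩
      have hZe1 : (Datum.M q (i:ℤ)).Z ![1, 0] = q ^ (i:ℤ) • ![1, 0] := by
        rw [hMZ i]
        funext j'
        fin_cases j' <;> simp
      have h := hfZ ![1, 0]
      rw [hZe1, map_smul] at h
      have h2 : (Datum.N1 (k := k)).Z (f ![1, 0]) = 0 := by
        show (0 : Module.End k (Fin 2 → k)) (f ![1, 0]) = 0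
        simp
      rw [h2] at h
      rcases smul_eq_zero.mp h with h3 | h3
      · exact zpow_ne_zero (i : ℤ) hq0 h3
      · exact he1 (f.map_eq_zero_iff.mp h3)
  · exact aux_dim12 _ _ (by rw [Module.finrank_self, Module.finrank_fin_fun]; omega)
  · intro V _ _ _ d hrep hind
    exact aux_complete hn hq V d hrep hind
end

section
/- The tensor product datum N₀ ⊗ N₁ is isomorphic to N₀ ⊕ N₀, and for every integer i the tensor product datum N₀ ⊗ M_i is isomorphic to N₀ ⊕ N₀. -/
open TensorProduct

noncomputable def stmt11_aux (k : Type*) [Field k] (W : Type*) [AddCommGroup W]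
    [Module k W] : (k ⊗[k] W) ≃ₗ[k] W := TensorProduct.lid k W

theorem stmt11_tensorZ {k : Type*} [Field k] {W : Type*} [AddCommGroup W] [Module k W]
    (n : ℕ) (hn : 1 ≤ n) (q a : k) (e : Datum k W) :
    (Datum.tensor n q a (Datum.N0 (k := k)) e).Z = 0 := by
  ext w
  simp [Datum.tensor, Datum.N0]

theorem stmt11_tensorX {k : Type*} [Field k] {W : Type*} [AddCommGroup W] [Module k W]
    (n : ℕ) (hn : 1 ≤ n) (q a : k) (e : Datum k W) :
    (Datum.tensor n q a (Datum.N0 (k := k)) e).X = 0 := by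
  have h0 : ((0 : Module.End k k) ^ n) = 0 := zero_pow (by omega)
  ext w
  simp [Datum.tensor, Datum.N0, h0]

/-- `N₀ ⊗ N₁ ≅ N₀ ⊕ N₀` and `N₀ ⊗ M_i ≅ N₀ ⊕ N₀`. -/
theorem stmt_11 {k : Type*} [Field k] [CharZero k] (n : ℕ) (hn : 1 ≤ n)
    (q a : k) (hq : IsPrimitiveRoot q (2 * n)) (ha : a ≠ 0) :
    Datum.Iso (Datum.tensor n q a (Datum.N0 (k := k)) (Datum.N1 (k := k)))
      (Datum.dsum (Datum.N0 (k := k)) (Datum.N0 (k := k))) ∧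
    ∀ i : ℤ, Datum.Iso (Datum.tensor n q a (Datum.N0 (k := k)) (Datum.M q i))
      (Datum.dsum (Datum.N0 (k := k)) (Datum.N0 (k := k))) := by
  have key : ∀ e : Datum k (Fin 2 → k),
      Datum.Iso (Datum.tensor n q a (Datum.N0 (k := k)) e)
        (Datum.dsum (Datum.N0 (k := k)) (Datum.N0 (k := k))) := by
    intro e
    refine ⟨(TensorProduct.lid k (Fin 2 → k)).trans (LinearEquiv.finTwoArrow k k),
      ?_, ?_⟩ <;> intro v
    · rw [stmt11_tensorZ n hn q a e]
      simp only [LinearMap.zero_apply, LinearEquiv.map_zero, LinearEquiv.trans_apply]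
      simp [Datum.dsum, Datum.N0, Prod.ext_iff]
    · rw [stmt11_tensorX n hn q a e]
      simp only [LinearMap.zero_apply, LinearEquiv.map_zero, LinearEquiv.trans_apply]
      simp [Datum.dsum, Datum.N0, Prod.ext_iff]
  exact ⟨key _, fun i => key _⟩
end

section
/- The tensor product datum N₁ ⊗ N₁ is isomorphic to N₁ ⊕ N₁, and for every integer i the tensor product data N₁ ⊗ M_i and M_i ⊗ N₁ are both isomorphic to N₁ ⊕ N₁. -/
open TensorProduct

section Helpers
variable {k : Type*} [Field k]

variable {k : Type*} [Field k]

noncomputable def Fc (c : k) :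
    (Fin 2 → k) →ₗ[k] (Fin 2 → k) →ₗ[k] ((Fin 2 → k) × (Fin 2 → k)) :=
  LinearMap.mk₂ k
    (fun v w => (![v 0 * w 0, v 1 * w 0],
      ![v 0 * w 1 - c * (v 1 * w 0), v 1 * w 1]))
    (by intro v v' w
        refine Prod.ext ?_ ?_ <;> funext j <;> fin_cases j <;>
          simp [Pi.add_apply] <;> ring)
    (by intro t v w
        refine Prod.ext ?_ ?_ <;> funext j <;> fin_cases j <;>
          simp [Pi.smul_apply, smul_eq_mul] <;> ring)
    (by intro v w w'
        refine Prod.ext ?_ ?_ <;> funext j <;> fin_cases j <;>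
          simp [Pi.add_apply] <;> ring)
    (by intro t v w
        refine Prod.ext ?_ ?_ <;> funext j <;> fin_cases j <;>
          simp [Pi.smul_apply, smul_eq_mul] <;> ring)

@[simp] lemma Fc_apply (c : k) (v w : Fin 2 → k) :
    Fc c v w = (![v 0 * w 0, v 1 * w 0],
      ![v 0 * w 1 - c * (v 1 * w 0), v 1 * w 1]) := rfl

noncomputable def Gc (c : k) :
    ((Fin 2 → k) × (Fin 2 → k)) →ₗ[k] (Fin 2 → k) ⊗[k] (Fin 2 → k) where
  toFun p := p.1 ⊗ₜ ![1, 0] + (p.2 + (c * p.1 1) • ![1, 0]) ⊗ₜ ![0, 1]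
  map_add' p q := by
    simp only [Prod.fst_add, Prod.snd_add, Pi.add_apply, add_tmul, mul_add, add_smul]
    abel
  map_smul' t p := by
    simp only [Prod.smul_fst, Prod.smul_snd, Pi.smul_apply, smul_eq_mul,
      RingHom.id_apply, smul_add, smul_tmul', smul_smul]
    rw [mul_left_comm]

@[simp] lemma Gc_apply (c : k) (p : (Fin 2 → k) × (Fin 2 → k)) :
    Gc c p = p.1 ⊗ₜ[k] ![1, 0] + (p.2 + (c * p.1 1) • ![1, 0]) ⊗ₜ[k] ![0, 1] := rfl

noncomputable def equivC (c : k) :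
    ((Fin 2 → k) ⊗[k] (Fin 2 → k)) ≃ₗ[k] ((Fin 2 → k) × (Fin 2 → k)) :=
  LinearEquiv.ofLinear (TensorProduct.lift (Fc c)) (Gc c)
    (by
      apply LinearMap.ext; intro p
      simp only [LinearMap.comp_apply, Gc_apply, map_add, TensorProduct.lift.tmul, Fc_apply,
        LinearMap.id_apply]
      refine Prod.ext ?_ ?_ <;> funext j <;> fin_cases j <;>
        simp [Pi.add_apply, Pi.smul_apply, smul_eq_mul] <;> ring)
    (by
      apply TensorProduct.ext'; intro v w
      simp only [LinearMap.comp_apply, TensorProduct.lift.tmul, Fc_apply, Gc_apply,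
        LinearMap.id_apply]
      have h1 : (![v 0 * w 0, v 1 * w 0] : Fin 2 → k) = w 0 • v := by
        funext j; fin_cases j <;> simp [mul_comm]
      have h2 : (![v 0 * w 1 - c * (v 1 * w 0), v 1 * w 1] : Fin 2 → k)
          + (c * (![v 0 * w 0, v 1 * w 0] : Fin 2 → k) 1) • ![1, 0] = w 1 • v := by
        funext j; fin_cases j <;> simp <;> ring
      rw [h2, h1, smul_tmul, smul_tmul, ← tmul_add]
      congr 1
      funext j; fin_cases j <;> simp)

@[simp] lemma equivC_tmul (c : k) (v w : Fin 2 → k) :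
    equivC c (v ⊗ₜ[k] w) = (![v 0 * w 0, v 1 * w 0],
      ![v 0 * w 1 - c * (v 1 * w 0), v 1 * w 1]) := by
  simp [equivC, LinearEquiv.ofLinear_apply]

lemma diag_pow (x y : k) (m : ℕ) :
    (Matrix.toLin' !![x, 0; 0, y] : Module.End k (Fin 2 → k)) ^ m
      = Matrix.toLin' !![x ^ m, 0; 0, y ^ m] := by
  induction m with
  | zero =>
      rw [pow_zero, pow_zero, pow_zero,
        show !![(1:k), 0; 0, 1] = 1 from Matrix.one_fin_two.symm, Matrix.toLin'_one]
      rfl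
  | succ m ih =>
      rw [pow_succ, ih, pow_succ, pow_succ, Module.End.mul_eq_comp, ← Matrix.toLin'_mul]
      congr 1
      rw [Matrix.mul_fin_two]
      norm_num

lemma hXv (v : Fin 2 → k) :
    (Matrix.toLin' !![(0:k), 0; 1, 0]) v = ![0, v 0] := by
  funext j; fin_cases j <;>
    simp [Matrix.toLin'_apply, Matrix.mulVec, dotProduct, Fin.sum_univ_two]

lemma leftN1 (n : ℕ) (hn : 1 ≤ n) (q a : k) (e : Datum k (Fin 2 → k)) :
    Datum.Iso (Datum.tensor n q a (Datum.N1 (k := k)) e)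
      (Datum.dsum (Datum.N1 (k := k)) (Datum.N1 (k := k))) := by
  have hZ : (Datum.tensor n q a (Datum.N1 (k := k)) e).Z = 0 := by
    simp [Datum.tensor, Datum.N1, zero_pow (by omega : n + 1 ≠ 0)]
  have hX : (Datum.tensor n q a (Datum.N1 (k := k)) e).X
      = TensorProduct.map (Matrix.toLin' !![(0:k), 0; 1, 0]) LinearMap.id := by
    simp [Datum.tensor, Datum.N1, zero_pow (by omega : n ≠ 0)]
  refine ⟨equivC 0, ?_, ?_⟩
  · intro v; rw [hZ]
    rw [LinearMap.zero_apply, LinearEquiv.map_zero]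
    simp [Datum.dsum, Datum.N1, LinearMap.prodMap_apply]
  · have key : (equivC (0:k)).toLinearMap ∘ₗ
        TensorProduct.map (Matrix.toLin' !![(0:k), 0; 1, 0]) LinearMap.id
        = (Datum.dsum (Datum.N1 (k := k)) (Datum.N1 (k := k))).X ∘ₗ
          (equivC 0).toLinearMap := by
      apply TensorProduct.ext'; intro v w
      simp only [LinearMap.comp_apply, LinearEquiv.coe_coe, TensorProduct.map_tmul,
        LinearMap.id_apply, hXv, equivC_tmul, Datum.dsum, Datum.N1,
        LinearMap.prodMap_apply, Prod.map_apply]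
      refine Prod.ext ?_ ?_ <;> funext j <;> fin_cases j <;>
        simp [hXv] <;> ring
    intro t; rw [hX]
    exact LinearMap.congr_fun key t

lemma hdiagv (c : k) (v : Fin 2 → k) :
    (Matrix.toLin' !![c, 0; 0, -c]) v = ![c * v 0, -c * v 1] := by
  funext j; fin_cases j <;>
    simp [Matrix.toLin'_apply, Matrix.mulVec, dotProduct, Fin.sum_univ_two]

lemma rightM (n : ℕ) (hn : 1 ≤ n) (q a : k) (hqn : q ^ n = -1) (hq0 : q ≠ 0) (i : ℤ) :
    Datum.Iso (Datum.tensor n q a (Datum.M q i) (Datum.N1 (k := k)))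
      (Datum.dsum (Datum.N1 (k := k)) (Datum.N1 (k := k))) := by
  set c : k := (q ^ i) ^ n with hc
  have hZ : (Datum.tensor n q a (Datum.M q i) (Datum.N1 (k := k))).Z = 0 := by
    simp [Datum.tensor, Datum.N1, TensorProduct.map_zero_right]
  have hZn : ((Datum.M q i).Z : Module.End k (Fin 2 → k)) ^ n
      = Matrix.toLin' !![c, 0; 0, -c] := by
    have h1 : (q ^ (i + 1) : k) ^ n = -c := by
      rw [zpow_add₀ hq0, mul_pow, zpow_one, hqn, hc]; ring
    rw [show (Datum.M q i).Z = Matrix.toLin' !![q ^ i, 0; 0, q ^ (i + 1)] from rfl,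
      diag_pow, h1]
  have hX : (Datum.tensor n q a (Datum.M q i) (Datum.N1 (k := k))).X
      = TensorProduct.map (Matrix.toLin' !![(0:k), 0; 1, 0]) LinearMap.id
        + TensorProduct.map (Matrix.toLin' !![c, 0; 0, -c])
            (Matrix.toLin' !![(0:k), 0; 1, 0]) := by
    rw [show (Datum.tensor n q a (Datum.M q i) (Datum.N1 (k := k))).X
        = TensorProduct.map (Datum.M q i).X LinearMap.id
          + TensorProduct.map ((Datum.M q i).Z ^ n) (Datum.N1 (k := k)).X from rfl,
      hZn]
    rfl
  refine ⟨equivC c, ?_, ?_⟩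
  · intro v; rw [hZ, LinearMap.zero_apply, LinearEquiv.map_zero]
    simp [Datum.dsum, Datum.N1, LinearMap.prodMap_apply]
  · have key : (equivC c).toLinearMap ∘ₗ
        (Datum.tensor n q a (Datum.M q i) (Datum.N1 (k := k))).X
        = (Datum.dsum (Datum.N1 (k := k)) (Datum.N1 (k := k))).X ∘ₗ
          (equivC c).toLinearMap := by
      rw [hX]
      apply TensorProduct.ext'; intro v w
      simp only [LinearMap.comp_apply, LinearEquiv.coe_coe, LinearMap.add_apply,
        TensorProduct.map_tmul, LinearMap.id_apply, hXv, hdiagv, LinearEquiv.map_add,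
        equivC_tmul, Datum.dsum, Datum.N1, LinearMap.prodMap_apply, Prod.map_apply]
      refine Prod.ext ?_ ?_ <;> funext j <;> fin_cases j <;>
        simp [hXv, Pi.add_apply] <;> ring
    intro t
    exact LinearMap.congr_fun key t

end Helpers

/-- `N₁ ⊗ N₁ ≅ N₁ ⊕ N₁`, and `N₁ ⊗ M_i ≅ N₁ ⊕ N₁`,
`M_i ⊗ N₁ ≅ N₁ ⊕ N₁` for every integer `i`. -/
theorem stmt_13 {k : Type*} [Field k] [CharZero k] (n : ℕ) (hn : 1 ≤ n)
    (q a : k) (hq : IsPrimitiveRoot q (2 * n)) (ha : a ≠ 0) :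
    Datum.Iso (Datum.tensor n q a (Datum.N1 (k := k)) (Datum.N1 (k := k)))
      (Datum.dsum (Datum.N1 (k := k)) (Datum.N1 (k := k))) ∧
    ∀ i : ℤ,
      Datum.Iso (Datum.tensor n q a (Datum.N1 (k := k)) (Datum.M q i))
        (Datum.dsum (Datum.N1 (k := k)) (Datum.N1 (k := k))) ∧
      Datum.Iso (Datum.tensor n q a (Datum.M q i) (Datum.N1 (k := k)))
        (Datum.dsum (Datum.N1 (k := k)) (Datum.N1 (k := k))) := by
  have hq0 : q ≠ 0 := hq.ne_zero (by omega)
  have hqn : q ^ n = -1 := by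
    have h3 : q ^ n * q ^ n = 1 := by
      rw [← pow_add]
      have : n + n = 2 * n := by omega
      rw [this]; exact hq.pow_eq_one
    rcases mul_self_eq_one_iff.mp h3 with h | h
    · exact absurd h (hq.pow_ne_one_of_pos_of_lt (by omega) (by omega))
    · exact h
  exact ⟨leftN1 n hn q a _, fun i => ⟨leftN1 n hn q a _, rightM n hn q a hqn hq0 i⟩⟩
end

section
/- Let n ≥ 1 and let I be the two-sided ideal of the free (noncommutative) ring ℤ⟨x₁, x₂, x₃⟩ generated by x₁^{2n} − 1, x₂² − x₁x₂ − x₂, x₁x₂ − x₂x₁, x₃² − x₃, x₁x₃ − x₃, x₃x₁ − x₃, and x₃x₂ − 2x₃. Then the quotient ring ℤ⟨x₁, x₂, x₃⟩/I is a free ℤ-module of rank 4n + 2, the images of the monomials x₁^i x₂^j (0 ≤ i ≤ 2n−1, j ∈ {0,1}) together with x₃ and x₂x₃ forming a ℤ-basis; in particular the quotient ring is not commutative, since x₂x₃ ≠ x₃x₂ in it. -/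
/-!
Left multiplication by each generator maps the `ℤ`-span of the monomials `x₁^i x₂^j`, `x₃`,
`x₂x₃` into itself, and the span contains `1`, so these `4n + 2` monomials span the quotient.
For independence, represent the quotient on `ℤ[x]/(x^{2n} - 1)[y]/(y² - (x+1)y) × M₂(ℤ)`: the
first factor kills `x₃` and sends the `x₁^i x₂^j` to a power basis, while in the second `x₃` and
`x₂x₃` become two independent matrices. These matrices do not commute, and neither do `x₂`, `x₃`.
-/

open FreeAlgebra

/-- The relations cutting out the two-sided ideal
`I = (x₁^{2n} - 1, x₂² - x₁x₂ - x₂, x₁x₂ - x₂x₁, x₃² - x₃, x₁x₃ - x₃, x₃x₁ - x₃, x₃x₂ - 2x₃)`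
of the free ring `ℤ⟨x₁, x₂, x₃⟩`; quotienting by this relation is quotienting by `I`. -/
inductive greenRel (n : ℕ) : FreeAlgebra ℤ (Fin 3) → FreeAlgebra ℤ (Fin 3) → Prop
  | r1 : greenRel n (ι ℤ 0 ^ (2 * n)) 1
  | r2 : greenRel n (ι ℤ 1 ^ 2) (ι ℤ 0 * ι ℤ 1 + ι ℤ 1)
  | r3 : greenRel n (ι ℤ 0 * ι ℤ 1) (ι ℤ 1 * ι ℤ 0)
  | r4 : greenRel n (ι ℤ 2 ^ 2) (ι ℤ 2)
  | r5 : greenRel n (ι ℤ 0 * ι ℤ 2) (ι ℤ 2)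
  | r6 : greenRel n (ι ℤ 2 * ι ℤ 0) (ι ℤ 2)
  | r7 : greenRel n (ι ℤ 2 * ι ℤ 1) (2 * ι ℤ 2)

open Polynomial Submodule Set

section
variable {R M N ι κ : Type*} [Ring R] [AddCommGroup M] [AddCommGroup N] [Module R M] [Module R N]

theorem LinearIndependent.sumElim_prod_zero {b : ι → M} (c : ι → N) {w : κ → N}
    (hb : LinearIndependent R b) (hw : LinearIndependent R w) :
    LinearIndependent R (Sum.elim (fun i ↦ (b i, c i)) (fun k ↦ ((0 : M), w k))) := by
  refine .sum_type (.of_comp (LinearMap.fst R M N) hb)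
    (hw.map' (LinearMap.inr R M N) (LinearMap.ker_eq_bot_of_injective LinearMap.inr_injective)) ?_
  refine (range_ker_disjoint (f := LinearMap.fst R M N) (v := fun i ↦ (b i, c i)) hb).mono_right
    (span_le.2 ?_)
  rintro _ ⟨k, rfl⟩
  rfl

end

theorem Submodule.span_range_eq_top_of_mul_mem {R A ι : Type*} [CommSemiring R] [Semiring A]
    [Algebra R A] {s : Set A} (hs : Algebra.adjoin R s = ⊤) {v : ι → A}
    (h1 : 1 ∈ span R (range v)) (hmul : ∀ a ∈ s, ∀ i, a * v i ∈ span R (range v)) :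
    span R (range v) = ⊤ := by
  have key : ∀ a : A, ∀ m ∈ span R (range v), a * m ∈ span R (range v) := by
    intro a
    have ha : a ∈ Algebra.adjoin R s := hs ▸ Algebra.mem_top
    induction ha using Algebra.adjoin_induction with
    | mem a ha =>
      intro m hm
      induction hm using span_induction with
      | mem x hx => obtain ⟨i, rfl⟩ := hx; exact hmul a ha i
      | zero => simp
      | add x y _ _ hx hy => rw [mul_add]; exact add_mem hx hy
      | smul r x _ hx => rw [mul_smul_comm]; exact smul_mem _ r hx
    | algebraMap r => intro m hm; rw [← Algebra.smul_def]; exact smul_mem _ r hm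
    | add a b _ _ ha hb => intro m hm; rw [add_mul]; exact add_mem (ha m hm) (hb m hm)
    | mul a b _ _ ha hb => intro m hm; rw [mul_assoc]; exact ha _ (hb m hm)
  exact eq_top_iff'.2 fun a ↦ mul_one a ▸ key a 1 h1

abbrev GreenRing (n : ℕ) := RingQuot (greenRel n)

namespace GreenRing

variable {n : ℕ}

variable (n) in
def gen (i : Fin 3) : GreenRing n := RingQuot.mkRingHom (greenRel n) (ι ℤ i)

theorem adjoin_range_gen : Algebra.adjoin ℤ (range (gen n)) = ⊤ := by
  have : range (gen n) = RingQuot.mkAlgHom ℤ (greenRel n) '' range (ι ℤ) := by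
    rw [← range_comp]; congr 1; funext i
    exact (DFunLike.congr_fun (RingQuot.mkAlgHom_coe ℤ (greenRel n)) _).symm
  rw [this, Algebra.adjoin_image, adjoin_range_ι, Algebra.map_top, AlgHom.range_eq_top]
  exact RingQuot.mkAlgHom_surjective ℤ _

theorem gen_zero_pow : gen n 0 ^ (2 * n) = 1 := by
  simpa [gen] using RingQuot.mkRingHom_rel (greenRel.r1 (n := n))

theorem gen_one_sq : gen n 1 ^ 2 = gen n 0 * gen n 1 + gen n 1 := by
  simpa [gen] using RingQuot.mkRingHom_rel (greenRel.r2 (n := n))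

theorem commute_gen_zero_gen_one : Commute (gen n 0) (gen n 1) := by
  simpa [gen, Commute, SemiconjBy] using RingQuot.mkRingHom_rel (greenRel.r3 (n := n))

theorem gen_two_mul_self : gen n 2 * gen n 2 = gen n 2 := by
  simpa [gen, sq] using RingQuot.mkRingHom_rel (greenRel.r4 (n := n))

theorem gen_zero_mul_gen_two : gen n 0 * gen n 2 = gen n 2 := by
  simpa [gen] using RingQuot.mkRingHom_rel (greenRel.r5 (n := n))

theorem gen_two_mul_gen_zero : gen n 2 * gen n 0 = gen n 2 := by
  simpa [gen] using RingQuot.mkRingHom_rel (greenRel.r6 (n := n))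

theorem gen_two_mul_gen_one : gen n 2 * gen n 1 = 2 * gen n 2 := by
  simpa [gen, map_ofNat] using RingQuot.mkRingHom_rel (greenRel.r7 (n := n))

theorem gen_two_mul_gen_zero_pow (i : ℕ) : gen n 2 * gen n 0 ^ i = gen n 2 := by
  induction i with
  | zero => rw [pow_zero, mul_one]
  | succ i ih => rw [pow_succ, ← mul_assoc, ih, gen_two_mul_gen_zero]

variable (n) in
def basisFamily : (Fin (2 * n) × Fin 2) ⊕ Fin 2 → GreenRing n :=
  Sum.elim (fun p ↦ gen n 0 ^ (p.1 : ℕ) * gen n 1 ^ (p.2 : ℕ)) ![gen n 2, gen n 1 * gen n 2]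

@[simp]
theorem basisFamily_inl (p : Fin (2 * n) × Fin 2) :
    basisFamily n (.inl p) = gen n 0 ^ (p.1 : ℕ) * gen n 1 ^ (p.2 : ℕ) := rfl

@[simp]
theorem basisFamily_inr_zero : basisFamily n (.inr 0) = gen n 2 := rfl

@[simp]
theorem basisFamily_inr_one : basisFamily n (.inr 1) = gen n 1 * gen n 2 := rfl

theorem gen_zero_pow_mul_mem (hn : 1 ≤ n) (k : ℕ) (j : Fin 2) :
    gen n 0 ^ k * gen n 1 ^ (j : ℕ) ∈ span ℤ (range (basisFamily n)) := by
  rw [pow_eq_pow_mod k gen_zero_pow]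
  exact subset_span ⟨.inl (⟨k % (2 * n), Nat.mod_lt _ (by omega)⟩, j), rfl⟩

theorem gen_two_mem : gen n 2 ∈ span ℤ (range (basisFamily n)) :=
  subset_span ⟨.inr 0, rfl⟩

theorem gen_one_mul_gen_two_mem : gen n 1 * gen n 2 ∈ span ℤ (range (basisFamily n)) :=
  subset_span ⟨.inr 1, rfl⟩

theorem gen_zero_mul_basisFamily_mem (hn : 1 ≤ n) (b : (Fin (2 * n) × Fin 2) ⊕ Fin 2) :
    gen n 0 * basisFamily n b ∈ span ℤ (range (basisFamily n)) := by
  match b with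
  | .inl (i, j) =>
    rw [basisFamily_inl, ← mul_assoc, ← pow_succ']
    exact gen_zero_pow_mul_mem hn _ j
  | .inr 0 =>
    rw [basisFamily_inr_zero, gen_zero_mul_gen_two]
    exact gen_two_mem
  | .inr 1 =>
    rw [basisFamily_inr_one, ← mul_assoc, commute_gen_zero_gen_one.eq, mul_assoc,
      gen_zero_mul_gen_two]
    exact gen_one_mul_gen_two_mem

theorem gen_one_mul_basisFamily_mem (hn : 1 ≤ n) (b : (Fin (2 * n) × Fin 2) ⊕ Fin 2) :
    gen n 1 * basisFamily n b ∈ span ℤ (range (basisFamily n)) := by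
  match b with
  | .inl (i, 0) =>
    rw [basisFamily_inl, ← mul_assoc, ← (commute_gen_zero_gen_one.pow_left _).eq, mul_assoc]
    simpa using gen_zero_pow_mul_mem hn i 1
  | .inl (i, 1) =>
    rw [basisFamily_inl, ← mul_assoc, ← (commute_gen_zero_gen_one.pow_left _).eq, mul_assoc,
      Fin.val_one, pow_one, ← sq, gen_one_sq, mul_add, ← mul_assoc, ← pow_succ]
    exact add_mem (by simpa using gen_zero_pow_mul_mem hn _ 1)
      (by simpa using gen_zero_pow_mul_mem hn _ 1)
  | .inr 0 => exact gen_one_mul_gen_two_mem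
  | .inr 1 =>
    rw [basisFamily_inr_one, ← mul_assoc, ← sq, gen_one_sq, add_mul, mul_assoc]
    exact add_mem (gen_zero_mul_basisFamily_mem hn (.inr 1)) gen_one_mul_gen_two_mem

theorem gen_two_mul_basisFamily_mem (b : (Fin (2 * n) × Fin 2) ⊕ Fin 2) :
    gen n 2 * basisFamily n b ∈ span ℤ (range (basisFamily n)) := by
  match b with
  | .inl (i, 0) =>
    rw [basisFamily_inl, ← mul_assoc, gen_two_mul_gen_zero_pow]
    simpa using gen_two_mem
  | .inl (i, 1) =>
    rw [basisFamily_inl, ← mul_assoc, gen_two_mul_gen_zero_pow, Fin.val_one, pow_one,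
      gen_two_mul_gen_one, two_mul (gen n 2)]
    exact add_mem gen_two_mem gen_two_mem
  | .inr 0 =>
    rw [basisFamily_inr_zero, gen_two_mul_self]
    exact gen_two_mem
  | .inr 1 =>
    rw [basisFamily_inr_one, ← mul_assoc, gen_two_mul_gen_one, mul_assoc, gen_two_mul_self,
      two_mul (gen n 2)]
    exact add_mem gen_two_mem gen_two_mem

theorem span_basisFamily_eq_top (hn : 1 ≤ n) : span ℤ (range (basisFamily n)) = ⊤ := by
  have one_mem : 1 ∈ span ℤ (range (basisFamily n)) := by
    simpa using gen_zero_pow_mul_mem hn 0 0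
  have gen_mul_mem :
      ∀ a ∈ range (gen n), ∀ b, a * basisFamily n b ∈ span ℤ (range (basisFamily n)) := by
    rintro _ ⟨a, rfl⟩ b
    match a with
    | 0 => exact gen_zero_mul_basisFamily_mem hn b
    | 1 => exact gen_one_mul_basisFamily_mem hn b
    | 2 => exact gen_two_mul_basisFamily_mem b
  exact span_range_eq_top_of_mul_mem adjoin_range_gen one_mem gen_mul_mem

variable (n) in
abbrev CyclicRing := AdjoinRoot (X ^ (2 * n) - C 1 : ℤ[X])

variable (n) in
/-- A model of the quotient of `GreenRing n` by the ideal generated by `x₃`. -/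
abbrev CommModel := AdjoinRoot (X * (X - C (AdjoinRoot.root _ + 1)) : (CyclicRing n)[X])

noncomputable section

variable (n) in
def ζ : CommModel n := algebraMap (CyclicRing n) (CommModel n) (AdjoinRoot.root _)

variable (n) in
def η : CommModel n := AdjoinRoot.root _

theorem ζ_pow : ζ n ^ (2 * n) = 1 := by
  have h := AdjoinRoot.eval₂_root (X ^ (2 * n) - C 1 : ℤ[X])
  simp only [eval₂_sub, eval₂_X_pow, eval₂_one, map_one, sub_eq_zero] at h
  rw [ζ, ← map_pow, h, map_one]

theorem η_sq : η n ^ 2 = ζ n * η n + η n := by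
  have h := AdjoinRoot.eval₂_root (X * (X - C (AdjoinRoot.root _ + 1)) : (CyclicRing n)[X])
  simp only [eval₂_mul, eval₂_sub, eval₂_X, eval₂_add, eval₂_C, eval₂_one, map_add, map_one,
    ← AdjoinRoot.algebraMap_eq] at h
  rw [ζ, η]
  linear_combination h

theorem nontrivial_cyclicRing (hn : 1 ≤ n) : Nontrivial (CyclicRing n) :=
  AdjoinRoot.nontrivial _ <| by
    rw [degree_X_pow_sub_C (by omega)]
    exact_mod_cast (by omega : 2 * n ≠ 0)

def cyclicRingBasis (hn : 1 ≤ n) : Module.Basis (Fin (2 * n)) ℤ (CyclicRing n) :=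
  (AdjoinRoot.powerBasis' (monic_X_pow_sub_C 1 (by omega))).basis.reindex
    (finCongr natDegree_X_pow_sub_C)

def commModelBasisOver (hn : 1 ≤ n) : Module.Basis (Fin 2) (CyclicRing n) (CommModel n) :=
  have := nontrivial_cyclicRing hn
  (AdjoinRoot.powerBasis' (monic_X.mul (monic_X_sub_C _))).basis.reindex
    (finCongr (by rw [AdjoinRoot.powerBasis'_dim, monic_X.natDegree_mul (monic_X_sub_C _),
      natDegree_X, natDegree_X_sub_C]))

def commModelBasis (hn : 1 ≤ n) : Module.Basis (Fin (2 * n) × Fin 2) ℤ (CommModel n) :=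
  (cyclicRingBasis hn).smulTower (commModelBasisOver hn)

theorem commModelBasis_apply (hn : 1 ≤ n) (p : Fin (2 * n) × Fin 2) :
    commModelBasis hn p = ζ n ^ (p.1 : ℕ) * η n ^ (p.2 : ℕ) := by
  simp only [commModelBasis, Module.Basis.smulTower_apply, cyclicRingBasis, commModelBasisOver,
    Module.Basis.reindex_apply, PowerBasis.basis_eq_pow, AdjoinRoot.powerBasis'_gen,
    Algebra.smul_def, map_pow, ζ, η]
  rfl

/-- `matB` and `matC` are the matrices of left multiplication by `x₂` and `x₃` on the ideal
`ℤ x₃ ⊕ ℤ x₂x₃`, in that basis; `x₁` acts there as the identity. -/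
def matB : Matrix (Fin 2) (Fin 2) ℤ := !![0, 0; 1, 2]

def matC : Matrix (Fin 2) (Fin 2) ℤ := !![1, 2; 0, 0]

theorem matB_sq : matB ^ 2 = matB + matB := by decide

theorem matC_sq : matC ^ 2 = matC := by decide

theorem matC_mul_matB : matC * matB = 2 * matC := by decide

theorem matB_mul_matC : matB * matC = matB := by decide

theorem linearIndependent_matC_matB : LinearIndependent ℤ ![matC, matB] := by
  refine LinearIndependent.pair_iff.2 fun s t h ↦ ⟨?_, ?_⟩
  · simpa [matB, matC] using congrFun (congrFun h 0) 0
  · simpa [matB, matC] using congrFun (congrFun h 1) 0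

variable (n) in
def toModel : GreenRing n →ₐ[ℤ] CommModel n × Matrix (Fin 2) (Fin 2) ℤ :=
  RingQuot.liftAlgHom ℤ ⟨FreeAlgebra.lift ℤ ![(ζ n, 1), (η n, matB), (0, matC)], fun x y h ↦ by
    cases h <;>
      simp [ζ_pow, η_sq, matB_sq, matC_sq, matC_mul_matB, map_ofNat, mul_comm (ζ n), Prod.ext_iff]⟩

theorem toModel_gen (i : Fin 3) :
    toModel n (gen n i) = ![(ζ n, 1), (η n, matB), (0, matC)] i := by
  rw [gen, ← RingQuot.mkAlgHom_coe ℤ, AlgHom.coe_toRingHom, toModel,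
    RingQuot.liftAlgHom_mkAlgHom_apply, lift_ι_apply]

theorem linearIndependent_basisFamily (hn : 1 ≤ n) : LinearIndependent ℤ (basisFamily n) := by
  have h : (toModel n).toLinearMap ∘ basisFamily n =
      Sum.elim (fun p ↦ (commModelBasis hn p, matB ^ (p.2 : ℕ)))
        (fun k ↦ (0, ![matC, matB] k)) := by
    funext b
    match b with
    | .inl p => simp [toModel_gen, commModelBasis_apply]
    | .inr 0 => simp [toModel_gen]
    | .inr 1 => simp [toModel_gen, matB_mul_matC]
  exact LinearIndependent.of_comp (toModel n).toLinearMap (h ▸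
    (commModelBasis hn).linearIndependent.sumElim_prod_zero _ linearIndependent_matC_matB)

theorem gen_one_mul_gen_two_ne : gen n 1 * gen n 2 ≠ gen n 2 * gen n 1 := by
  intro h
  have := congrArg (fun x ↦ (toModel n x).2) h
  simp only [map_mul, toModel_gen, Fin.isValue, Matrix.cons_val_zero, Matrix.cons_val_one,
    Matrix.cons_val, Prod.mk_mul_mk, matB_mul_matC, matC_mul_matB] at this
  exact absurd this (by decide)

end

end GreenRing

open GreenRing in
/-- the quotient `ℤ⟨x₁,x₂,x₃⟩/I` is a free `ℤ`-module of rank `4n + 2`,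
with basis the images of `x₁^i x₂^j` (`0 ≤ i ≤ 2n-1`, `j ∈ {0,1}`) together with `x₃` and
`x₂x₃`; in particular it is not commutative, since `x₂x₃ ≠ x₃x₂` in it. -/
theorem stmt_14 (n : ℕ) (hn : 1 ≤ n) :
    Module.Free ℤ (RingQuot (greenRel n)) ∧
    Module.rank ℤ (RingQuot (greenRel n)) = 4 * n + 2 ∧
    (∃ B : Module.Basis ((Fin (2 * n) × Fin 2) ⊕ Fin 2) ℤ (RingQuot (greenRel n)),
      (∀ p : Fin (2 * n) × Fin 2,
        B (Sum.inl p) = RingQuot.mkRingHom (greenRel n)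
          (ι ℤ 0 ^ (p.1 : ℕ) * ι ℤ 1 ^ (p.2 : ℕ))) ∧
      B (Sum.inr 0) = RingQuot.mkRingHom (greenRel n) (ι ℤ 2) ∧
      B (Sum.inr 1) = RingQuot.mkRingHom (greenRel n) (ι ℤ 1 * ι ℤ 2)) ∧
    RingQuot.mkRingHom (greenRel n) (ι ℤ 1) * RingQuot.mkRingHom (greenRel n) (ι ℤ 2)
      ≠ RingQuot.mkRingHom (greenRel n) (ι ℤ 2) * RingQuot.mkRingHom (greenRel n) (ι ℤ 1) := by
  let B := Module.Basis.mk (linearIndependent_basisFamily hn) (span_basisFamily_eq_top hn).ge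
  refine ⟨.of_basis B, ?_, ⟨B, fun p ↦ ?_, ?_, ?_⟩, gen_one_mul_gen_two_ne⟩
  · rw [rank_eq_card_basis B]
    simp only [Fintype.card_sum, Fintype.card_prod, Fintype.card_fin, Nat.cast_add, Nat.cast_mul,
      Nat.cast_ofNat]
    ring
  · simp [B, gen]
  · simp [B, gen]
  · simp [B, gen]
end

section
/- Let A* be the quotient of the free k-algebra on two generators G, X by the two-sided ideal generated by G^{2n+1} − G, GX + XG, and X² − (1 − G²), and let H* be the quotient of the free k-algebra on two generators α, η by the two-sided ideal generated by α^{2n} − 1, αη + ηα, and η² − (1 − α²). Then J := G^{2n} is a central idempotent of A*, and A* is isomorphic as a k-algebra to the product ring H* × k[y]/(y² − 1). -/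
open FreeAlgebra

variable (k : Type*) [Field k]

/-- The relations defining `A* = 𝔴H₄ₙ* = k⟨G,X⟩/(G^{2n+1} - G, GX + XG, X² - (1 - G²))`. -/
inductive wdRel (n : ℕ) : FreeAlgebra k (Fin 2) → FreeAlgebra k (Fin 2) → Prop
  | r1 : wdRel n (ι k 0 ^ (2 * n + 1)) (ι k 0)
  | r2 : wdRel n (ι k 0 * ι k 1) (-(ι k 1 * ι k 0))
  | r3 : wdRel n (ι k 1 ^ 2) (1 - ι k 0 ^ 2)

/-- The relations defining `H* = H₄ₙ* = k⟨α,η⟩/(α^{2n} - 1, αη + ηα, η² - (1 - α²))`. -/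
inductive hdRel (n : ℕ) : FreeAlgebra k (Fin 2) → FreeAlgebra k (Fin 2) → Prop
  | r1 : hdRel n (ι k 0 ^ (2 * n)) 1
  | r2 : hdRel n (ι k 0 * ι k 1) (-(ι k 1 * ι k 0))
  | r3 : hdRel n (ι k 1 ^ 2) (1 - ι k 0 ^ 2)

noncomputable section Stmt15Aux

variable (n : ℕ)

/-- `G` in `A*`. -/
def GA : RingQuot (wdRel k n) := RingQuot.mkAlgHom k (wdRel k n) (ι k 0)
/-- `X` in `A*`. -/
def XA : RingQuot (wdRel k n) := RingQuot.mkAlgHom k (wdRel k n) (ι k 1)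
/-- `J = G^{2n}` in `A*`. -/
def JA : RingQuot (wdRel k n) := GA k n ^ (2 * n)
/-- `e = 1 - J` in `A*`. -/
def EA : RingQuot (wdRel k n) := 1 - JA k n

lemma rA1 : GA k n ^ (2 * n + 1) = GA k n := by
  rw [GA, ← map_pow]
  exact RingQuot.mkAlgHom_rel k wdRel.r1

lemma rA2 : GA k n * XA k n = -(XA k n * GA k n) := by
  rw [GA, XA, ← map_mul, ← map_mul, ← map_neg]
  exact RingQuot.mkAlgHom_rel k wdRel.r2

lemma rA3 : XA k n ^ 2 = 1 - GA k n ^ 2 := by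
  rw [XA, GA, ← map_pow, ← map_pow, ← map_one (RingQuot.mkAlgHom k (wdRel k n)), ← map_sub]
  exact RingQuot.mkAlgHom_rel k wdRel.r3

lemma rA2' : XA k n * GA k n = -(GA k n * XA k n) := by rw [rA2, neg_neg]

lemma GA_pow_absorb (m : ℕ) (hm : 1 ≤ m) : GA k n ^ (m + 2 * n) = GA k n ^ m := by
  obtain ⟨m, rfl⟩ := Nat.exists_eq_add_of_le hm
  have h : 1 + m + 2 * n = m + (2 * n + 1) := by ring
  rw [h, pow_add, rA1, Nat.add_comm 1 m, pow_succ]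

lemma GA_pow_mul_JA (m : ℕ) (hm : 1 ≤ m) : GA k n ^ m * JA k n = GA k n ^ m := by
  rw [JA, ← pow_add]; exact GA_pow_absorb k n m hm

lemma JA_idem (hn : 1 ≤ n) : JA k n * JA k n = JA k n := by
  rw [JA]; exact GA_pow_mul_JA k n (2 * n) (by omega)

lemma GA_mul_JA : GA k n * JA k n = GA k n := by
  have := GA_pow_mul_JA k n 1 le_rfl
  simpa using this

lemma GA_sq_mul_JA : GA k n ^ 2 * JA k n = GA k n ^ 2 :=
  GA_pow_mul_JA k n 2 (by omega)

lemma GA_sq_comm_XA : GA k n ^ 2 * XA k n = XA k n * GA k n ^ 2 := by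
  have h := rA2 k n
  have h' : XA k n * GA k n = -(GA k n * XA k n) := rA2' k n
  calc GA k n ^ 2 * XA k n = GA k n * (GA k n * XA k n) := by rw [pow_two, mul_assoc]
    _ = GA k n * -(XA k n * GA k n) := by rw [h]
    _ = -(GA k n * XA k n) * GA k n := by
        rw [mul_neg (GA k n) (XA k n * GA k n), neg_mul (GA k n * XA k n) (GA k n), mul_assoc]
    _ = XA k n * GA k n ^ 2 := by rw [← h', pow_two, mul_assoc]

lemma GA_even_comm_XA (m : ℕ) :
    (GA k n ^ 2) ^ m * XA k n = XA k n * (GA k n ^ 2) ^ m := by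
  induction m with
  | zero => simp
  | succ m ih =>
    rw [pow_succ, mul_assoc, GA_sq_comm_XA, ← mul_assoc, ih, mul_assoc]

lemma JA_comm_XA : JA k n * XA k n = XA k n * JA k n := by
  rw [JA, pow_mul]; exact GA_even_comm_XA k n n

lemma JA_central (u : RingQuot (wdRel k n)) : JA k n * u = u * JA k n := by
  obtain ⟨a, rfl⟩ := RingQuot.mkAlgHom_surjective k (wdRel k n) u
  refine FreeAlgebra.induction k (Fin 2)
    (motive := fun a => JA k n * RingQuot.mkAlgHom k (wdRel k n) a
      = RingQuot.mkAlgHom k (wdRel k n) a * JA k n) ?_ ?_ ?_ ?_ a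
  · intro r
    rw [AlgHom.commutes]
    exact (Algebra.commutes r _).symm
  · intro x
    fin_cases x
    · show JA k n * GA k n = GA k n * JA k n
      rw [JA, ← pow_succ, ← pow_succ']
    · show JA k n * XA k n = XA k n * JA k n
      exact JA_comm_XA k n
  · intro a b ha hb
    rw [map_mul, ← mul_assoc, ha, mul_assoc, hb, ← mul_assoc]
  · intro a b ha hb
    rw [map_add, mul_add, add_mul, ha, hb]

lemma EA_central (u : RingQuot (wdRel k n)) : EA k n * u = u * EA k n := by
  rw [EA, sub_mul, mul_sub, one_mul, mul_one, JA_central]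

lemma JA_mul_GA : JA k n * GA k n = GA k n := by
  rw [JA_central]; exact GA_mul_JA k n

lemma JA_mul_GA_sq : JA k n * GA k n ^ 2 = GA k n ^ 2 := by
  rw [JA_central]; exact GA_sq_mul_JA k n

lemma JA_mul_EA (hn : 1 ≤ n) : JA k n * EA k n = 0 := by
  rw [EA, mul_sub, mul_one, JA_idem k n hn, sub_self]

lemma EA_mul_JA (hn : 1 ≤ n) : EA k n * JA k n = 0 := by
  rw [← JA_central]; exact JA_mul_EA k n hn

lemma EA_idem (hn : 1 ≤ n) : EA k n * EA k n = EA k n := by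
  have h : EA k n * EA k n = (1 - JA k n) * EA k n := by rw [← EA]
  rw [h, sub_mul, one_mul, JA_mul_EA k n hn, sub_zero]

lemma GA_pow_mul_EA (m : ℕ) (hm : 1 ≤ m) : GA k n ^ m * EA k n = 0 := by
  rw [EA, mul_sub, mul_one, GA_pow_mul_JA k n m hm, sub_self]

lemma GA_mul_EA : GA k n * EA k n = 0 := by
  have := GA_pow_mul_EA k n 1 le_rfl
  simpa using this

lemma EA_mul_GA : EA k n * GA k n = 0 := by
  rw [EA_central k n (GA k n)]; exact GA_mul_EA k n

lemma EA_mul_GA_sq : EA k n * GA k n ^ 2 = 0 := by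
  rw [EA_central k n (GA k n ^ 2)]; exact GA_pow_mul_EA k n 2 (by omega)

lemma JA_add_EA : JA k n + EA k n = 1 := by rw [EA]; abel

/-- `α` in `H*`. -/
def alH : RingQuot (hdRel k n) := RingQuot.mkAlgHom k (hdRel k n) (ι k 0)
/-- `η` in `H*`. -/
def etH : RingQuot (hdRel k n) := RingQuot.mkAlgHom k (hdRel k n) (ι k 1)

lemma rH1 : alH k n ^ (2 * n) = 1 := by
  rw [alH, ← map_pow, ← map_one (RingQuot.mkAlgHom k (hdRel k n))]
  exact RingQuot.mkAlgHom_rel k hdRel.r1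

lemma rH2 : alH k n * etH k n = -(etH k n * alH k n) := by
  rw [alH, etH, ← map_mul, ← map_mul, ← map_neg]
  exact RingQuot.mkAlgHom_rel k hdRel.r2

lemma rH3 : etH k n ^ 2 = 1 - alH k n ^ 2 := by
  rw [etH, alH, ← map_pow, ← map_pow, ← map_one (RingQuot.mkAlgHom k (hdRel k n)), ← map_sub]
  exact RingQuot.mkAlgHom_rel k hdRel.r3

/-- The image of `y` in `k[y]/(y²-1)`. -/
def yK : Polynomial k ⧸ Ideal.span {(Polynomial.X : Polynomial k) ^ 2 - 1} :=
  Ideal.Quotient.mk _ Polynomial.X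

lemma yK_sq : yK k ^ 2 = 1 := by
  have h : (Ideal.Quotient.mk (Ideal.span {(Polynomial.X : Polynomial k) ^ 2 - 1}))
      ((Polynomial.X : Polynomial k) ^ 2 - 1) = 0 :=
    Ideal.Quotient.eq_zero_iff_mem.mpr (Ideal.mem_span_singleton_self _)
  rw [map_sub, map_pow, map_one] at h
  rw [yK, sub_eq_zero.mp h]

/-- Free lift of `φ : A* → H* × k[y]/(y²-1)`, `G ↦ (α,0)`, `X ↦ (η,ȳ)`. -/
def phiF : FreeAlgebra k (Fin 2) →ₐ[k]
    RingQuot (hdRel k n) × (Polynomial k ⧸ Ideal.span {(Polynomial.X : Polynomial k) ^ 2 - 1}) :=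
  FreeAlgebra.lift k ![(alH k n, 0), (etH k n, yK k)]

lemma phiF_rel (hn : 1 ≤ n) : ∀ ⦃x y⦄, wdRel k n x y → phiF k n x = phiF k n y := by
  intro x y h
  cases h with
  | r1 =>
    have h1 : alH k n ^ (2 * n + 1) = alH k n := by rw [pow_succ, rH1, one_mul]
    simp only [phiF, map_pow, FreeAlgebra.lift_ι_apply, Matrix.cons_val_zero, Prod.pow_mk, h1,
      zero_pow (by omega : 2 * n + 1 ≠ 0)]
  | r2 =>
    simp only [phiF, map_mul, map_neg, FreeAlgebra.lift_ι_apply, Matrix.cons_val_zero,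
      Matrix.cons_val_one, Matrix.head_cons, Prod.mk_mul_mk]
    refine Prod.ext ?_ ?_
    · simpa using rH2 k n
    · simp
  | r3 =>
    simp only [phiF, map_pow, map_sub, map_one, FreeAlgebra.lift_ι_apply, Matrix.cons_val_zero,
      Matrix.cons_val_one, Matrix.head_cons]
    refine Prod.ext ?_ ?_
    · simpa using rH3 k n
    · show yK k ^ 2 = ((1 : _ × _) - (alH k n, (0 : Polynomial k ⧸
        Ideal.span {(Polynomial.X : Polynomial k) ^ 2 - 1})) ^ 2).2
      rw [Prod.snd_sub, Prod.pow_snd, Prod.snd_one, zero_pow (by norm_num : (2:ℕ) ≠ 0),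
        sub_zero, yK_sq k]

/-- `φ : A* → H* × k[y]/(y²-1)`. -/
def phi (hn : 1 ≤ n) : RingQuot (wdRel k n) →ₐ[k]
    RingQuot (hdRel k n) × (Polynomial k ⧸ Ideal.span {(Polynomial.X : Polynomial k) ^ 2 - 1}) :=
  RingQuot.liftAlgHom k ⟨phiF k n, phiF_rel k n hn⟩

lemma phi_G (hn : 1 ≤ n) : phi k n hn (GA k n) = (alH k n, 0) := by
  rw [GA, phi, RingQuot.liftAlgHom_mkAlgHom_apply, phiF, FreeAlgebra.lift_ι_apply]
  simp

lemma phi_X (hn : 1 ≤ n) : phi k n hn (XA k n) = (etH k n, yK k) := by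
  rw [XA, phi, RingQuot.liftAlgHom_mkAlgHom_apply, phiF, FreeAlgebra.lift_ι_apply]
  simp

lemma phi_J (hn : 1 ≤ n) : phi k n hn (JA k n) = (1, 0) := by
  rw [JA, map_pow, phi_G k n hn, Prod.pow_mk, rH1, zero_pow (by omega : 2 * n ≠ 0)]

lemma phi_E (hn : 1 ≤ n) : phi k n hn (EA k n) = (0, 1) := by
  rw [EA, map_sub, map_one, phi_J k n hn]
  refine Prod.ext ?_ ?_ <;> simp

/-- Free lift of `ψ₁ : H* → A*`, `α ↦ G + e`, `η ↦ J X`. -/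
def psi1F : FreeAlgebra k (Fin 2) →ₐ[k] RingQuot (wdRel k n) :=
  FreeAlgebra.lift k ![GA k n + EA k n, JA k n * XA k n]

lemma GE_pow (hn : 1 ≤ n) (m : ℕ) :
    (GA k n + EA k n) ^ (m + 1) = GA k n ^ (m + 1) + EA k n := by
  induction m with
  | zero => simp
  | succ m ih =>
    calc (GA k n + EA k n) ^ (m + 2)
        = (GA k n ^ (m + 1) + EA k n) * (GA k n + EA k n) := by rw [pow_succ, ih]
      _ = GA k n ^ (m + 1) * GA k n + GA k n ^ (m + 1) * EA k n
          + (EA k n * GA k n + EA k n * EA k n) := by rw [add_mul, mul_add, mul_add]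
      _ = GA k n ^ (m + 2) + EA k n := by
          rw [GA_pow_mul_EA k n (m + 1) (by omega), EA_mul_GA, EA_idem k n hn,
            add_zero, zero_add, ← pow_succ]

lemma psi1F_rel (hn : 1 ≤ n) : ∀ ⦃x y⦄, hdRel k n x y → psi1F k n x = psi1F k n y := by
  intro x y h
  cases h with
  | r1 =>
    simp only [psi1F, map_pow, map_one, FreeAlgebra.lift_ι_apply, Matrix.cons_val_zero]
    obtain ⟨m, hm⟩ : ∃ m, 2 * n = m + 1 := ⟨2 * n - 1, by omega⟩
    rw [hm, GE_pow k n hn m, ← hm]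
    rw [show GA k n ^ (2 * n) = JA k n from rfl, JA_add_EA]
  | r2 =>
    simp only [psi1F, map_mul, map_neg, FreeAlgebra.lift_ι_apply, Matrix.cons_val_zero,
      Matrix.cons_val_one, Matrix.head_cons]
    have L : (GA k n + EA k n) * (JA k n * XA k n) = GA k n * XA k n := by
      rw [add_mul, ← mul_assoc, ← mul_assoc, GA_mul_JA, EA_mul_JA k n hn, zero_mul, add_zero]
    have R : (JA k n * XA k n) * (GA k n + EA k n) = -(GA k n * XA k n) := by
      rw [mul_add, mul_assoc, mul_assoc, rA2']
      rw [show XA k n * EA k n = EA k n * XA k n from (EA_central k n (XA k n)).symm]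
      rw [mul_neg (JA k n) (GA k n * XA k n), ← mul_assoc (JA k n) (GA k n) (XA k n),
        JA_mul_GA, ← mul_assoc (JA k n) (EA k n) (XA k n), JA_mul_EA k n hn, zero_mul, add_zero]
    rw [L, R, neg_neg]
  | r3 =>
    simp only [psi1F, map_pow, map_sub, map_one, FreeAlgebra.lift_ι_apply, Matrix.cons_val_zero,
      Matrix.cons_val_one, Matrix.head_cons]
    have L : (JA k n * XA k n) ^ 2 = JA k n - GA k n ^ 2 := by
      calc (JA k n * XA k n) ^ 2
          = JA k n * ((XA k n * JA k n) * XA k n) := by rw [pow_two, mul_assoc, ← mul_assoc (XA k n)]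
        _ = JA k n * ((JA k n * XA k n) * XA k n) := by rw [← JA_comm_XA]
        _ = (JA k n * JA k n) * (XA k n * XA k n) := by
            rw [mul_assoc (JA k n) (XA k n), ← mul_assoc]
        _ = JA k n * XA k n ^ 2 := by rw [JA_idem k n hn, pow_two]
        _ = JA k n - GA k n ^ 2 := by rw [rA3, mul_sub, mul_one, JA_mul_GA_sq]
    have R : (GA k n + EA k n) ^ 2 = GA k n ^ 2 + EA k n := by
      simpa using GE_pow k n hn 1
    rw [L, R, EA]
    abel

/-- `ψ₁ : H* → A*`. -/
def psi1 (hn : 1 ≤ n) : RingQuot (hdRel k n) →ₐ[k] RingQuot (wdRel k n) :=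
  RingQuot.liftAlgHom k ⟨psi1F k n, psi1F_rel k n hn⟩

lemma psi1_al (hn : 1 ≤ n) : psi1 k n hn (alH k n) = GA k n + EA k n := by
  rw [alH, psi1, RingQuot.liftAlgHom_mkAlgHom_apply, psi1F, FreeAlgebra.lift_ι_apply]
  simp

lemma psi1_et (hn : 1 ≤ n) : psi1 k n hn (etH k n) = JA k n * XA k n := by
  rw [etH, psi1, RingQuot.liftAlgHom_mkAlgHom_apply, psi1F, FreeAlgebra.lift_ι_apply]
  simp

/-- `t = eX + J`, the image of `y` in `A*`. -/
def tA : RingQuot (wdRel k n) := EA k n * XA k n + JA k n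

lemma tA_sq (hn : 1 ≤ n) : tA k n ^ 2 = 1 := by
  rw [tA, pow_two, add_mul, mul_add, mul_add]
  have h1 : (EA k n * XA k n) * (EA k n * XA k n) = EA k n := by
    calc (EA k n * XA k n) * (EA k n * XA k n)
        = EA k n * ((XA k n * EA k n) * XA k n) := by rw [mul_assoc, ← mul_assoc (XA k n)]
      _ = EA k n * ((EA k n * XA k n) * XA k n) := by rw [← EA_central]
      _ = (EA k n * EA k n) * (XA k n * XA k n) := by
          rw [mul_assoc (EA k n) (XA k n), ← mul_assoc]
      _ = EA k n * XA k n ^ 2 := by rw [EA_idem k n hn, pow_two]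
      _ = EA k n := by
          rw [rA3, mul_sub, mul_one, EA_mul_GA_sq, sub_zero]
  have h2 : (EA k n * XA k n) * JA k n = 0 := by
    rw [mul_assoc, ← JA_central, ← mul_assoc, EA_mul_JA k n hn, zero_mul]
  have h3 : JA k n * (EA k n * XA k n) = 0 := by
    rw [← mul_assoc, JA_mul_EA k n hn, zero_mul]
  rw [h1, h2, h3, JA_idem k n hn, add_zero, zero_add, add_comm (EA k n) (JA k n), JA_add_EA]

/-- `ψ₂ : k[y]/(y²-1) → A*`. -/
def psi2 (hn : 1 ≤ n) :
    (Polynomial k ⧸ Ideal.span {(Polynomial.X : Polynomial k) ^ 2 - 1}) →ₐ[k]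
      RingQuot (wdRel k n) :=
  Ideal.Quotient.liftₐ _ (Polynomial.aeval (tA k n)) (by
    intro a ha
    rw [Ideal.mem_span_singleton] at ha
    obtain ⟨c, rfl⟩ := ha
    rw [map_mul, map_sub, map_pow, map_one, Polynomial.aeval_X, tA_sq k n hn, sub_self, zero_mul])

lemma psi2_y (hn : 1 ≤ n) : psi2 k n hn (yK k) = tA k n := by
  rw [yK, psi2, Ideal.Quotient.liftₐ_apply]
  exact Polynomial.aeval_X (tA k n)

/-- `ψ : H* × k[y]/(y²-1) → A*`, `(h,p) ↦ ψ₁(h)J + ψ₂(p)e`. -/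
def psiP (hn : 1 ≤ n) :
    (RingQuot (hdRel k n) × (Polynomial k ⧸ Ideal.span {(Polynomial.X : Polynomial k) ^ 2 - 1}))
      →ₐ[k] RingQuot (wdRel k n) where
  toFun p := psi1 k n hn p.1 * JA k n + psi2 k n hn p.2 * EA k n
  map_one' := by
    simp only [Prod.fst_one, Prod.snd_one, map_one, one_mul]
    exact JA_add_EA k n
  map_mul' p q := by
    simp only [Prod.fst_mul, Prod.snd_mul, map_mul]
    have l1 : ∀ x y : RingQuot (wdRel k n),
        (x * JA k n) * (y * JA k n) = (x * y) * JA k n := fun x y => by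
      rw [mul_assoc, JA_central k n (y * JA k n), mul_assoc y, JA_idem k n hn, ← mul_assoc]
    have l2 : ∀ x y : RingQuot (wdRel k n), (x * JA k n) * (y * EA k n) = 0 := fun x y => by
      rw [mul_assoc, JA_central k n (y * EA k n), mul_assoc, EA_mul_JA k n hn, mul_zero, mul_zero]
    have l3 : ∀ x y : RingQuot (wdRel k n), (x * EA k n) * (y * JA k n) = 0 := fun x y => by
      rw [mul_assoc, EA_central k n (y * JA k n), mul_assoc, JA_mul_EA k n hn, mul_zero, mul_zero]
    have l4 : ∀ x y : RingQuot (wdRel k n),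
        (x * EA k n) * (y * EA k n) = (x * y) * EA k n := fun x y => by
      rw [mul_assoc, EA_central k n (y * EA k n), mul_assoc y, EA_idem k n hn, ← mul_assoc]
    rw [add_mul, mul_add, mul_add, l1, l2, l3, l4, add_zero, zero_add]
  map_zero' := by simp
  map_add' p q := by
    simp only [Prod.fst_add, Prod.snd_add, map_add]
    rw [add_mul, add_mul]
    abel
  commutes' c := by
    have h1 : (algebraMap k (RingQuot (hdRel k n) ×
        (Polynomial k ⧸ Ideal.span {(Polynomial.X : Polynomial k) ^ 2 - 1})) c).1
        = algebraMap k _ c := rfl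
    have h2 : (algebraMap k (RingQuot (hdRel k n) ×
        (Polynomial k ⧸ Ideal.span {(Polynomial.X : Polynomial k) ^ 2 - 1})) c).2
        = algebraMap k _ c := rfl
    simp only [h1, h2, AlgHom.commutes]
    rw [← mul_add, JA_add_EA, mul_one]

lemma psiP_apply (hn : 1 ≤ n) (a b) :
    psiP k n hn (a, b) = psi1 k n hn a * JA k n + psi2 k n hn b * EA k n := rfl

lemma comp2 (hn : 1 ≤ n) :
    (psiP k n hn).comp (phi k n hn) = AlgHom.id k (RingQuot (wdRel k n)) := by
  apply RingQuot.ringQuot_ext'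
  apply FreeAlgebra.hom_ext
  funext i
  fin_cases i
  · show psiP k n hn (phi k n hn (GA k n)) = GA k n
    rw [phi_G k n hn, psiP_apply, psi1_al k n hn, map_zero, zero_mul, add_zero, add_mul,
      GA_mul_JA, EA_mul_JA k n hn, add_zero]
  · show psiP k n hn (phi k n hn (XA k n)) = XA k n
    rw [phi_X k n hn, psiP_apply, psi1_et k n hn, psi2_y k n hn, tA]
    have h1 : (JA k n * XA k n) * JA k n = JA k n * XA k n := by
      rw [mul_assoc, ← JA_central, ← mul_assoc, JA_idem k n hn]
    have h2 : (EA k n * XA k n + JA k n) * EA k n = EA k n * XA k n := by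
      rw [add_mul, JA_mul_EA k n hn, add_zero, mul_assoc, ← EA_central, ← mul_assoc,
        EA_idem k n hn]
    rw [h1, h2, ← add_mul, JA_add_EA, one_mul]

lemma fst_comp (hn : 1 ≤ n) :
    (AlgHom.fst k _ _).comp ((phi k n hn).comp (psi1 k n hn))
      = AlgHom.id k (RingQuot (hdRel k n)) := by
  apply RingQuot.ringQuot_ext'
  apply FreeAlgebra.hom_ext
  funext i
  fin_cases i
  · show (AlgHom.fst k _ _) (phi k n hn (psi1 k n hn (alH k n))) = alH k n
    rw [psi1_al k n hn, map_add, phi_G k n hn, phi_E k n hn]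
    show ((alH k n, 0) + (0, 1) : _ × _).1 = alH k n
    simp
  · show (AlgHom.fst k _ _) (phi k n hn (psi1 k n hn (etH k n))) = etH k n
    rw [psi1_et k n hn, map_mul, phi_J k n hn, phi_X k n hn]
    show (((1 : RingQuot (hdRel k n)), 0) * (etH k n, yK k) : _ × _).1 = etH k n
    simp

lemma snd_comp (hn : 1 ≤ n) :
    (AlgHom.snd k _ _).comp ((phi k n hn).comp (psi2 k n hn))
      = AlgHom.id k (Polynomial k ⧸ Ideal.span {(Polynomial.X : Polynomial k) ^ 2 - 1}) := by
  apply Ideal.Quotient.algHom_ext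
  apply Polynomial.algHom_ext
  show (AlgHom.snd k _ _) (phi k n hn (psi2 k n hn (yK k))) = yK k
  rw [psi2_y k n hn, tA, map_add, map_mul, phi_E k n hn, phi_X k n hn, phi_J k n hn]
  show (((0 : RingQuot (hdRel k n)), 1) * (etH k n, yK k) + (1, 0) : _ × _).2 = yK k
  simp

lemma comp1 (hn : 1 ≤ n) :
    (phi k n hn).comp (psiP k n hn) = AlgHom.id k
      (RingQuot (hdRel k n) ×
        (Polynomial k ⧸ Ideal.span {(Polynomial.X : Polynomial k) ^ 2 - 1})) := by
  apply AlgHom.ext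
  rintro ⟨a, b⟩
  have ha := AlgHom.congr_fun (fst_comp k n hn) a
  have hb := AlgHom.congr_fun (snd_comp k n hn) b
  have hfst : ∀ p : RingQuot (hdRel k n) ×
      (Polynomial k ⧸ Ideal.span {(Polynomial.X : Polynomial k) ^ 2 - 1}),
      (AlgHom.fst k _ _) p = p.1 := fun _ => rfl
  have hsnd : ∀ p : RingQuot (hdRel k n) ×
      (Polynomial k ⧸ Ideal.span {(Polynomial.X : Polynomial k) ^ 2 - 1}),
      (AlgHom.snd k _ _) p = p.2 := fun _ => rfl
  simp only [AlgHom.coe_comp, Function.comp_apply, hfst, hsnd,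
    AlgHom.coe_id, id_eq] at ha hb
  simp only [AlgHom.coe_comp, Function.comp_apply, AlgHom.coe_id, id_eq]
  rw [psiP_apply, map_add, map_mul, map_mul, phi_J k n hn, phi_E k n hn]
  refine Prod.ext ?_ ?_
  · simpa using ha
  · simpa using hb

/-- The algebra isomorphism `A* ≃ H* × k[y]/(y²-1)`. -/
def theEquiv (hn : 1 ≤ n) :
    RingQuot (wdRel k n) ≃ₐ[k]
      (RingQuot (hdRel k n) ×
        (Polynomial k ⧸ Ideal.span {(Polynomial.X : Polynomial k) ^ 2 - 1})) :=
  AlgEquiv.ofAlgHom (phi k n hn) (psiP k n hn) (comp1 k n hn) (comp2 k n hn)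

end Stmt15Aux

/-- `J = G^{2n}` is a central idempotent of `A* = 𝔴H₄ₙ*`, and `A*` is
isomorphic as a `k`-algebra to `H₄ₙ* × k[y]/(y² - 1)`. -/
theorem stmt_15 {k : Type*} [Field k] [CharZero k] [IsAlgClosed k]
    (n : ℕ) (hn : 1 ≤ n) (q : k) (hq : IsPrimitiveRoot q (2 * n)) :
    (RingQuot.mkAlgHom k (wdRel k n) (ι k 0) ^ (2 * n)) *
        (RingQuot.mkAlgHom k (wdRel k n) (ι k 0) ^ (2 * n))
      = RingQuot.mkAlgHom k (wdRel k n) (ι k 0) ^ (2 * n) ∧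
    (∀ u : RingQuot (wdRel k n),
      (RingQuot.mkAlgHom k (wdRel k n) (ι k 0) ^ (2 * n)) * u
        = u * (RingQuot.mkAlgHom k (wdRel k n) (ι k 0) ^ (2 * n))) ∧
    Nonempty (RingQuot (wdRel k n) ≃ₐ[k]
      (RingQuot (hdRel k n) ×
        (Polynomial k ⧸ Ideal.span {(Polynomial.X : Polynomial k) ^ 2 - 1}))) := by
  refine ⟨JA_idem k n hn, fun u => JA_central k n u, ⟨theEquiv k n hn⟩⟩
end
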